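/- arXiv:1510.03912 — 10 statements merged into one kernel-verified Lean document; each statement's English description precedes it below -/
import Mathlib

section
/- For n ≥ 2k, the family P(n,k,1) of all vectors in V(n,k,1) whose last non-zero coordinate equals -1 is intersecting and has cardinality binom(n, k+1). -/
/-!
A vector of `P n k` is determined by its support, which can be any `(k + 1)`-set `s`: its `-1`
sits at `max s` and its `+1`s on the rest of `s`; this gives the count. For two such vectors `v`, `w`
whose `-1`s sit at `a ≤ b`, every coordinate `i ≠ a` of `v` is `0`, or `+1` with `i < a ≤ b`, where
`w i ≥ 0`; so the only possibly negative term of `dot v w` is `v a * w a ≥ -1`.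
-/

/-- `V n k l` : vectors in `{0,±1}^n` with exactly `k` coordinates `+1` and
exactly `l` coordinates `-1`. -/
def V (n k l : ℕ) : Set (Fin n → ℤ) :=
  {v | (∀ i, v i = 0 ∨ v i = 1 ∨ v i = -1) ∧
       (Finset.univ.filter fun i => v i = 1).card = k ∧
       (Finset.univ.filter fun i => v i = -1).card = l}

/-- scalar product -/
def dot {n : ℕ} (v w : Fin n → ℤ) : ℤ := ∑ i, v i * w i

/-- `P n k` : vectors of `V n k 1` whose last non-zero coordinate equals `-1`. -/
def P (n k : ℕ) : Set (Fin n → ℤ) :=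
  {v ∈ V n k 1 | ∃ j : Fin n, v j = -1 ∧ ∀ i : Fin n, j < i → v i = 0}

open Finset

lemma dot_comm {n : ℕ} (v w : Fin n → ℤ) : dot v w = dot w v := by
  simp only [dot, mul_comm]

def lastNegIndicator {n : ℕ} (s : Finset (Fin n)) : Fin n → ℤ :=
  fun i => if i ∈ s then if s.max = i then -1 else 1 else 0

section lastNegIndicator

variable {n : ℕ} {s t : Finset (Fin n)} {i a : Fin n}

lemma lastNegIndicator_eq_zero_or_one_or_neg_one :
    lastNegIndicator s i = 0 ∨ lastNegIndicator s i = 1 ∨ lastNegIndicator s i = -1 := by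
  unfold lastNegIndicator
  split_ifs <;> simp

lemma lastNegIndicator_ne_zero_iff : lastNegIndicator s i ≠ 0 ↔ i ∈ s := by
  unfold lastNegIndicator
  split_ifs <;> simp_all

lemma lastNegIndicator_injective : Function.Injective (lastNegIndicator (n := n)) := by
  intro s t h
  ext i
  rw [← lastNegIndicator_ne_zero_iff, h, lastNegIndicator_ne_zero_iff]

lemma lastNegIndicator_nonneg (h : s.max ≠ i) : 0 ≤ lastNegIndicator s i := by
  unfold lastNegIndicator
  split_ifs <;> simp_all

lemma lastNegIndicator_of_max_eq (ha : s.max = a) :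
    lastNegIndicator s i = if i = a then -1 else if i ∈ s then 1 else 0 := by
  unfold lastNegIndicator
  by_cases hi : i = a
  · simp [hi, mem_of_max ha, ha]
  · simp [hi, ha, WithBot.coe_inj, Ne.symm hi]

lemma lastNegIndicator_mem_P {k : ℕ} (hs : #s = k + 1) : lastNegIndicator s ∈ P n k := by
  obtain ⟨a, ha⟩ := max_of_nonempty (card_pos.mp (by omega) : s.Nonempty)
  have hpos : (univ.filter fun i => lastNegIndicator s i = 1) = s.erase a := by
    ext i
    rw [mem_filter, lastNegIndicator_of_max_eq ha]
    by_cases hi : i = a <;> simp [hi]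
  have hneg : (univ.filter fun i => lastNegIndicator s i = -1) = {a} := by
    ext i
    rw [mem_filter, lastNegIndicator_of_max_eq ha]
    by_cases hi : i = a <;> simp [hi, apply_ite (· = (-1 : ℤ))]
  refine ⟨⟨fun i => lastNegIndicator_eq_zero_or_one_or_neg_one, ?_, ?_⟩, a, ?_, fun i hai => ?_⟩
  · rw [hpos, card_erase_of_mem (mem_of_max ha)]
    omega
  · rw [hneg, card_singleton]
  · simp [lastNegIndicator_of_max_eq ha]
  · have his : i ∉ s := fun his => (le_max his).not_gt (ha ▸ WithBot.coe_lt_coe.mpr hai)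
    simp [lastNegIndicator_of_max_eq ha, hai.ne', his]

lemma neg_one_le_dot_lastNegIndicator (h : s.max ≤ t.max) :
    -1 ≤ dot (lastNegIndicator s) (lastNegIndicator t) := by
  obtain hs | ⟨a, ha⟩ := s.eq_empty_or_nonempty.imp_right max_of_nonempty
  · simp [hs, dot, lastNegIndicator]
  have hrest : ∀ i ∈ univ.erase a, 0 ≤ lastNegIndicator s i * lastNegIndicator t i := by
    intro i hi
    have hsi : s.max ≠ i := by simpa [ha] using (mem_erase.mp hi).1.symm
    by_cases his : i ∈ s
    · have hti : t.max ≠ i := fun hti => hsi (le_antisymm (hti ▸ h) (le_max his))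
      exact mul_nonneg (lastNegIndicator_nonneg hsi) (lastNegIndicator_nonneg hti)
    · simp [lastNegIndicator, his]
  have hat : -1 ≤ lastNegIndicator s a * lastNegIndicator t a := by
    rcases lastNegIndicator_eq_zero_or_one_or_neg_one (s := s) (i := a) with h1 | h1 | h1 <;>
      rcases lastNegIndicator_eq_zero_or_one_or_neg_one (s := t) (i := a) with h2 | h2 | h2 <;>
      simp [h1, h2]
  rw [dot, ← add_sum_erase _ _ (mem_univ a)]
  linarith [sum_nonneg hrest]

end lastNegIndicator

lemma exists_lastNegIndicator_eq_of_mem_P {n k : ℕ} {v : Fin n → ℤ} (hv : v ∈ P n k) :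
    ∃ s : Finset (Fin n), #s = k + 1 ∧ lastNegIndicator s = v := by
  obtain ⟨⟨hval, hpos, hneg⟩, j, hj, hzero⟩ := hv
  have hnegj : ∀ i, v i = -1 → i = j := fun i hi =>
    card_le_one.mp hneg.le i (by simp [hi]) j (by simp [hj])
  set s := univ.filter fun i => v i ≠ 0
  have hsupp : s = (univ.filter fun i => v i = 1) ∪ univ.filter fun i => v i = -1 := by
    rw [← filter_or]
    refine filter_congr fun i _ => ?_
    rcases hval i with h | h | h <;> simp [h]
  have hmax : s.max = j := le_antisymm
    (Finset.max_le fun i hi => WithBot.coe_le_coe.mpr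
      (not_lt.mp fun hji => (mem_filter.mp hi).2 (hzero i hji)))
    (le_max (by simp [s, hj]))
  refine ⟨s, ?_, funext fun i => ?_⟩
  · rw [hsupp, card_union_of_disjoint, hpos, hneg]
    exact disjoint_filter.mpr fun i _ h1 h2 => by simp [h1] at h2
  · rw [lastNegIndicator_of_max_eq hmax]
    by_cases hij : i = j
    · simp [hij, hj]
    rcases hval i with h | h | h
    · simp [hij, h, s]
    · simp [hij, h, s]
    · exact absurd (hnegj i h) hij

lemma P_eq_image (n k : ℕ) :
    P n k = lastNegIndicator '' ↑(powersetCard (k + 1) (univ : Finset (Fin n))) := by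
  ext v
  simp only [Set.mem_image, mem_coe, mem_powersetCard_univ]
  exact ⟨exists_lastNegIndicator_eq_of_mem_P, fun ⟨s, hs, hv⟩ => hv ▸ lastNegIndicator_mem_P hs⟩

theorem stmt_4_general (n k : ℕ) :
    (∀ v ∈ P n k, ∀ w ∈ P n k, -2 < dot v w) ∧
    (P n k).ncard = n.choose (k + 1) := by
  rw [P_eq_image]
  refine ⟨?_, ?_⟩
  · rintro _ ⟨s, -, rfl⟩ _ ⟨t, -, rfl⟩
    rcases le_total s.max t.max with h | h
    · linarith [neg_one_le_dot_lastNegIndicator h]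
    · rw [dot_comm]
      linarith [neg_one_le_dot_lastNegIndicator h]
  · rw [Set.ncard_image_of_injective _ lastNegIndicator_injective, Set.ncard_coe_finset,
      card_powersetCard, card_univ, Fintype.card_fin]

theorem stmt_4 (n k : ℕ) (hk : 1 ≤ k) (hn : 2 * k ≤ n) :
    (∀ v ∈ P n k, ∀ w ∈ P n k, -2 < dot v w) ∧
    (P n k).ncard = n.choose (k + 1) :=
  stmt_4_general n k
end

section
/- Fix a cyclic permutation π of [n] and let U(π,k) be the n intervals of length k along π. For any nonempty family F ⊂ U(π,k) and any 1 ≤ l < k, the number of (k-l)-element intervals of π contained in some member of F is at least min{|F| + l, n}. -/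
/-!
Identify an interval with its starting point in `ZMod n`, and let `T` be the set of starting
points of the members of `F`, so `|F| ≤ |T|`. The interval of length `k - l` starting at `t + j`
with `t ∈ T` and `j ≤ l` lies in the interval of length `k` starting at `t`, so the shadow
contains the intervals starting in `T + {0, …, l}`; as `k - l < n` these are pairwise distinct.
Finally `|B + {0, 1}| ≥ min (|B| + 1) n` for nonempty `B ⊆ ZMod n`, since a nonempty set closed
under `+ 1` is everything; iterating gives `|T + {0, …, l}| ≥ min (|T| + l) n`.
-/

/-- the family of the `n` cyclic intervals of length `m` along the cyclic
arrangement of `[n]` given by the bijection `π : ZMod n ≃ Fin n`. -/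
def cycInt (n : ℕ) (π : ZMod n ≃ Fin n) (m : ℕ) : Set (Finset (Fin n)) :=
  {S | ∃ t : ZMod n, S = (Finset.range m).image fun s : ℕ => π (t + (s : ZMod n))}

open Finset Pointwise

namespace ZMod

variable {n : ℕ}

theorem image_range_add_zero_one_subset (l : ℕ) :
    (range (l + 1)).image (Nat.cast : ℕ → ZMod n) + {0, 1} ⊆
      (range (l + 2)).image Nat.cast := by
  intro x hx
  obtain ⟨_, ⟨j, hj, rfl⟩, e, he, rfl⟩ := by simpa only [mem_add, mem_image] using hx
  rcases mem_insert.mp he with rfl | he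
  · exact mem_image.mpr ⟨j, by simp at hj ⊢; omega, by simp⟩
  · rw [mem_singleton.mp he]
    exact mem_image.mpr ⟨j + 1, by simp at hj ⊢; omega, by push_cast; rfl⟩

variable [NeZero n]

theorem eq_univ_of_forall_add_one_mem {B : Finset (ZMod n)} (hB : B.Nonempty)
    (h : ∀ b ∈ B, b + 1 ∈ B) : B = univ := by
  obtain ⟨b, hb⟩ := hB
  have hbm : ∀ m : ℕ, b + m ∈ B := by
    intro m
    induction m with
    | zero => simpa using hb
    | succ m ih => simpa [← add_assoc] using h _ ih
  refine eq_univ_of_forall fun x => ?_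
  simpa using hbm (x - b).val

theorem min_card_add_one_le_card_add_zero_one {B : Finset (ZMod n)} (hB : B.Nonempty) :
    min (#B + 1) n ≤ #(B + {0, 1}) := by
  by_cases hclosed : ∀ b ∈ B, b + 1 ∈ B
  · calc min (#B + 1) n ≤ n := min_le_right _ _
      _ = #B := by rw [eq_univ_of_forall_add_one_mem hB hclosed, card_univ, ZMod.card]
      _ ≤ #(B + {0, 1}) := card_le_card_add_right (by simp)
  · push Not at hclosed
    obtain ⟨b, hb, hb1⟩ := hclosed
    have hsub : insert (b + 1) B ⊆ B + {0, 1} := by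
      refine insert_subset (add_mem_add hb (by simp)) fun x hx => ?_
      simpa using add_mem_add hx (mem_insert_self 0 {1})
    calc min (#B + 1) n ≤ #B + 1 := min_le_left _ _
      _ = #(insert (b + 1) B) := (card_insert_of_notMem hb1).symm
      _ ≤ #(B + {0, 1}) := card_le_card hsub

theorem min_card_add_le_card_add_image_range {A : Finset (ZMod n)} (hA : A.Nonempty) (l : ℕ) :
    min (#A + l) n ≤ #(A + (range (l + 1)).image Nat.cast) := by
  induction l with
  | zero => exact (min_le_left _ _).trans (card_le_card_add_right (by simp))
  | succ l ih =>
    have hne : (A + (range (l + 1)).image (Nat.cast : ℕ → ZMod n)).Nonempty :=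
      hA.add (by simp)
    calc min (#A + (l + 1)) n ≤ min (#(A + (range (l + 1)).image Nat.cast) + 1) n := by omega
      _ ≤ #(A + (range (l + 1)).image Nat.cast + {0, 1}) :=
          min_card_add_one_le_card_add_zero_one hne
      _ ≤ #(A + (range (l + 2)).image Nat.cast) := by
          rw [add_assoc]
          exact card_le_card (add_subset_add_left (image_range_add_zero_one_subset l))

end ZMod

section Intervals

variable {n : ℕ} (π : ZMod n ≃ Fin n)

def cycIntAt (m : ℕ) (t : ZMod n) : Finset (Fin n) :=
  (range m).image fun s : ℕ => π (t + s)

theorem cycInt_eq_range (m : ℕ) : cycInt n π m = Set.range (cycIntAt π m) := by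
  ext S
  simp [cycInt, cycIntAt, eq_comm]

theorem cycIntAt_add_subset {m k j : ℕ} (h : j + m ≤ k) (t : ZMod n) :
    cycIntAt π m (t + j) ⊆ cycIntAt π k t := by
  simp only [cycIntAt, image_subset_iff, mem_range, mem_image]
  intro s hs
  exact ⟨j + s, by omega, by push_cast; rw [add_assoc]⟩

theorem mem_cycIntAt [NeZero n] {m : ℕ} (hm : m ≤ n) {t a : ZMod n} :
    π a ∈ cycIntAt π m t ↔ (a - t).val < m := by
  simp only [cycIntAt, mem_image, mem_range, π.apply_eq_iff_eq]
  constructor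
  · rintro ⟨s, hs, rfl⟩
    rwa [add_sub_cancel_left, ZMod.val_cast_of_lt (hs.trans_le hm)]
  · intro h
    exact ⟨(a - t).val, h, by simp⟩

/-- An interval of length `1 ≤ m < n` determines its start `t`: the only element whose
predecessor it misses. -/
theorem cycIntAt_injective [NeZero n] {m : ℕ} (hm1 : 1 ≤ m) (hmn : m < n) :
    Function.Injective (cycIntAt π m) := by
  have : Fact (1 < n) := ⟨by omega⟩
  intro t u h
  have hstart : (t - u).val < m := by
    rw [← mem_cycIntAt π hmn.le, ← h, mem_cycIntAt π hmn.le, sub_self, ZMod.val_zero]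
    omega
  have hpred : ¬ (t - 1 - u).val < m := by
    rw [← mem_cycIntAt π hmn.le, ← h, mem_cycIntAt π hmn.le, sub_sub_cancel_left,
      ZMod.val_neg_of_ne_zero, ZMod.val_one]
    omega
  by_contra hne
  have hpos : 1 ≤ (t - u).val := ZMod.val_pos.mpr (sub_ne_zero.mpr hne)
  rw [sub_right_comm, ZMod.val_sub (by rwa [ZMod.val_one])] at hpred
  omega

end Intervals

theorem stmt_8 (n k l : ℕ) (hn : 0 < n) (hk : k ≤ n) (hl : 1 ≤ l) (hlk : l < k)
    (π : ZMod n ≃ Fin n)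
    (F : Set (Finset (Fin n))) (hF : F ⊆ cycInt n π k) (hne : F.Nonempty) :
    min (F.ncard + l) n ≤
      {S | S ∈ cycInt n π (k - l) ∧ ∃ T ∈ F, S ⊆ T}.ncard := by
  classical
  have : NeZero n := ⟨hn.ne'⟩
  rw [cycInt_eq_range] at hF ⊢
  set T : Finset (ZMod n) := univ.filter (cycIntAt π k · ∈ F)
  have hT : (T : Set (ZMod n)) = cycIntAt π k ⁻¹' F := by ext; simp [T]
  have hFT : F.ncard ≤ #T := by
    rw [← Set.image_preimage_eq_of_subset hF, ← hT, ← Set.ncard_coe_finset]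
    exact Set.ncard_image_le T.finite_toSet
  have hTne : T.Nonempty := by
    obtain ⟨_, hS⟩ := hne
    obtain ⟨t, rfl⟩ := hF hS
    exact ⟨t, by simpa [T] using hS⟩
  set D := T + (range (l + 1)).image (Nat.cast : ℕ → ZMod n)
  have hshadow : cycIntAt π (k - l) '' D ⊆
      {S | S ∈ Set.range (cycIntAt π (k - l)) ∧ ∃ T ∈ F, S ⊆ T} := by
    rintro _ ⟨_, hu, rfl⟩
    obtain ⟨t, ht, _, hj, rfl⟩ := mem_add.mp (mem_coe.mp hu)
    obtain ⟨j, hjl, rfl⟩ := mem_image.mp hj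
    exact ⟨⟨_, rfl⟩, cycIntAt π k t, (mem_filter.mp ht).2,
      cycIntAt_add_subset π (by rw [mem_range] at hjl; omega) t⟩
  calc min (F.ncard + l) n ≤ min (#T + l) n := min_le_min_right _ (by omega)
    _ ≤ #D := ZMod.min_card_add_le_card_add_image_range hTne l
    _ = (cycIntAt π (k - l) '' D).ncard := by
        rw [Set.ncard_image_of_injective _ (cycIntAt_injective π (by omega) (by omega)),
          Set.ncard_coe_finset]
    _ ≤ _ := Set.ncard_le_ncard hshadow ((Set.finite_range _).subset fun _ hS => hS.1)
end

section
/- Let G be a finite vertex-transitive graph and H an induced subgraph of G. Then α(G) ≤ (α(H)/|V(H)|) * |V(G)|, where α denotes the independence number. -/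
/-!
Let `Γ` be the automorphism group of `G` and `I` a maximum independent set. Since `Γ` acts
transitively, a uniformly random `φ ∈ Γ` sends each vertex to a uniformly random vertex, so the
expected size of `φ(I) ∩ s` is `α(G) |s| / |V|`. But `φ(I) ∩ s` is an independent subset of `s`,
so this expectation is at most `α(H)`.
-/

/-- a finset of vertices is independent in `G` -/
def IsIndep {V : Type*} (G : SimpleGraph V) (I : Finset V) : Prop :=
  ∀ u ∈ I, ∀ v ∈ I, ¬ G.Adj u v

open Finset

section TransitiveAction

variable {Γ V : Type*} [Group Γ] [MulAction Γ V] [MulAction.IsPretransitive Γ V]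
  [Fintype Γ]

theorem sum_smul_eq_sum_smul {M : Type*} [AddCommMonoid M] (f : V → M) (u v : V) :
    ∑ g : Γ, f (g • u) = ∑ g : Γ, f (g • v) := by
  obtain ⟨h, rfl⟩ := MulAction.exists_smul_eq Γ u v
  rw [← Equiv.sum_comp (Equiv.mulRight h)]
  simp only [Equiv.coe_mulRight, mul_smul]

theorem card_smul_sum_smul [Fintype V] {M : Type*} [AddCommMonoid M] (f : V → M) (u : V) :
    Fintype.card V • ∑ g : Γ, f (g • u) = Fintype.card Γ • ∑ v, f v := by
  calc Fintype.card V • ∑ g : Γ, f (g • u)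
      = ∑ v : V, ∑ g : Γ, f (g • v) := by
        rw [← card_univ, ← sum_const]
        exact sum_congr rfl fun v _ => sum_smul_eq_sum_smul f u v
    _ = ∑ g : Γ, ∑ v, f (g • v) := sum_comm
    _ = ∑ _g : Γ, ∑ v, f v := sum_congr rfl fun g _ => Equiv.sum_comp (MulAction.toPerm g) f
    _ = Fintype.card Γ • ∑ v, f v := by rw [sum_const, card_univ]

theorem card_mul_sum_card_filter_smul_mem [Fintype V] [DecidableEq V] (I s : Finset V) :
    Fintype.card V * ∑ g : Γ, #{u ∈ I | g • u ∈ s} = Fintype.card Γ * (#I * #s) := by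
  have hfiber (u : V) :
      Fintype.card V * ∑ g : Γ, (if g • u ∈ s then 1 else 0) = Fintype.card Γ * #s := by
    have hs : ∑ v : V, (if v ∈ s then 1 else 0) = #s := by simp
    simpa only [smul_eq_mul, hs] using
      card_smul_sum_smul (Γ := Γ) (M := ℕ) (fun v => if v ∈ s then 1 else 0) u
  simp only [card_filter]
  rw [sum_comm, mul_sum, sum_congr rfl fun u _ => hfiber u, sum_const, smul_eq_mul]
  ring

end TransitiveAction

theorem IsIndep.mono {V : Type*} {G : SimpleGraph V} {I J : Finset V} (hI : IsIndep G I)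
    (hJ : J ⊆ I) : IsIndep G J :=
  fun u hu v hv => hI u (hJ hu) v (hJ hv)

theorem IsIndep.map {V W : Type*} {G : SimpleGraph V} {G' : SimpleGraph W} {I : Finset V}
    (hI : IsIndep G I) (f : G ↪g G') : IsIndep G' (I.map f.toEmbedding) := by
  simp only [IsIndep, mem_map]
  rintro _ ⟨u, hu, rfl⟩ _ ⟨v, hv, rfl⟩
  exact f.map_adj_iff.not.2 (hI u hu v hv)

theorem stmt_9_general {V : Type*} [Fintype V] [DecidableEq V] (G : SimpleGraph V)
    (htrans : ∀ u v : V, ∃ φ : G ≃g G, φ u = v)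
    (s : Finset V)
    (αG αH : ℕ)
    (hαG : IsGreatest {m | ∃ I : Finset V, IsIndep G I ∧ I.card = m} αG)
    (hαH : IsGreatest {m | ∃ I : Finset V, I ⊆ s ∧ IsIndep G I ∧ I.card = m} αH) :
    αG * s.card ≤ αH * Fintype.card V := by
  obtain ⟨⟨I, hI, rfl⟩, -⟩ := hαG
  have : MulAction.IsPretransitive (G ≃g G) V := ⟨htrans⟩
  have : Finite (G ≃g G) := Finite.of_injective _ RelIso.toEquiv_injective
  have := Fintype.ofFinite (G ≃g G)
  have hbound (φ : G ≃g G) : #{u ∈ I | φ • u ∈ s} ≤ αH := by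
    refine hαH.2 ⟨_, fun x hx => ?_, (hI.mono (filter_subset _ I)).map φ.toEmbedding, card_map _⟩
    obtain ⟨u, hu, rfl⟩ := mem_map.1 hx
    exact (mem_filter.1 hu).2
  refine Nat.le_of_mul_le_mul_left ?_ (Fintype.card_pos (α := G ≃g G))
  calc Fintype.card (G ≃g G) * (#I * #s)
      = Fintype.card V * ∑ φ : G ≃g G, #{u ∈ I | φ • u ∈ s} :=
        (card_mul_sum_card_filter_smul_mem I s).symm
    _ ≤ Fintype.card V * ∑ _φ : G ≃g G, αH := by gcongr with φ; exact hbound φ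
    _ = Fintype.card (G ≃g G) * (αH * Fintype.card V) := by
        rw [sum_const, card_univ, smul_eq_mul]; ring

theorem stmt_9 {V : Type*} [Fintype V] [DecidableEq V] (G : SimpleGraph V)
    (htrans : ∀ u v : V, ∃ φ : G ≃g G, φ u = v)
    (s : Finset V) (hs : s.Nonempty)
    (αG αH : ℕ)
    (hαG : IsGreatest {m | ∃ I : Finset V, IsIndep G I ∧ I.card = m} αG)
    (hαH : IsGreatest {m | ∃ I : Finset V, I ⊆ s ∧ IsIndep G I ∧ I.card = m} αH) :
    αG * s.card ≤ αH * Fintype.card V :=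
  stmt_9_general G htrans s αG αH hαG hαH
end

section
/- Let n ≥ 2k and c ≥ 1. Suppose A ⊂ ([n] choose k) and B ⊂ A are families such that every B ∈ B intersects every A ∈ A. Then |A| + c|B| ≤ max{ binom(n,k), (c+1)*binom(n-1,k-1) }. -/
/-!
Katona's circle method. Fix a cyclic arrangement `σ : ZMod n ≃ Fin n` and count only the
members of `A` and `B` that are arcs of `k` consecutive points. If no arc lies in `B`, at most
`n` arcs lie in `A`. Otherwise fix an arc of `B` starting at `b`: every arc of `A` starts in
`b - k, …, b + k - 1`, and since the arcs starting at `x` and `x + k` are disjoint (`n ≥ 2k`),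
pairing `x` with `x + k` shows that at most `2k` arcs lie in `A` and `B` together and at most `k`
in `B`; so the arcs contribute at most `max n ((c + 1) k)` to `#A + c #B`. Averaging over all `σ`,
every `k`-set is an arc equally often, and `k * n.choose k = n * (n - 1).choose (k - 1)` turns
this into the bound.
-/

open Finset

namespace Katona

section Shift

variable {G : Type*} [AddGroup G] [DecidableEq G] {𝒜 ℬ L R : Finset G} {a : G}

lemma card_inter_add_card_inter_le (hLR : L.image (· + a) ⊆ R) (hℬ : ∀ x ∈ ℬ, x + a ∉ 𝒜) :
    #(𝒜 ∩ R) + #(ℬ ∩ L) ≤ #R := by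
  have hdisj : Disjoint (𝒜 ∩ R) ((ℬ ∩ L).image (· + a)) := by
    simp only [disjoint_left, mem_inter, mem_image, not_exists, not_and]
    rintro _ ⟨hx𝒜, -⟩ x ⟨hxℬ, -⟩ rfl
    exact hℬ x hxℬ hx𝒜
  have hsub : (ℬ ∩ L).image (· + a) ⊆ R :=
    (image_subset_image inter_subset_right).trans hLR
  calc #(𝒜 ∩ R) + #(ℬ ∩ L) = #(𝒜 ∩ R ∪ (ℬ ∩ L).image (· + a)) := by
        rw [card_union_of_disjoint hdisj, card_image_of_injective _ (add_left_injective a)]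
    _ ≤ #R := card_le_card (union_subset inter_subset_right hsub)

theorem card_add_card_le_of_translate (hℬ𝒜 : ℬ ⊆ 𝒜) (h𝒜 : 𝒜 ⊆ L ∪ L.image (· + a))
    (hℬ : ∀ x ∈ ℬ, x + a ∉ 𝒜 ∧ x - a ∉ 𝒜) : #𝒜 + #ℬ ≤ 2 * #L ∧ #ℬ ≤ #L := by
  set R := L.image (· + a)
  have hR : #R ≤ #L := card_image_le
  have hRL : R.image (· + -a) ⊆ L := by
    simp only [R, image_image, Function.comp_def, add_neg_cancel_right, image_id', subset_rfl]
  have h₁ := card_inter_add_card_inter_le (𝒜 := 𝒜) (ℬ := ℬ) (R := R) subset_rfl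
    fun x hx => (hℬ x hx).1
  have h₂ := card_inter_add_card_inter_le (𝒜 := 𝒜) (ℬ := ℬ) hRL fun x hx => by
    simpa [← sub_eq_add_neg] using (hℬ x hx).2
  have hsplit : ∀ 𝒞 ⊆ L ∪ R, #𝒞 ≤ #(𝒞 ∩ L) + #(𝒞 ∩ R) := fun 𝒞 h𝒞 => by
    calc #𝒞 = #(𝒞 ∩ L ∪ 𝒞 ∩ R) := by rw [← inter_union_distrib_left, inter_eq_left.2 h𝒞]
      _ ≤ _ := card_union_le _ _
  have h𝒜' := hsplit 𝒜 h𝒜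
  have hℬ' := hsplit ℬ (hℬ𝒜.trans h𝒜)
  have hℬR : #(ℬ ∩ R) ≤ #(𝒜 ∩ R) := card_le_card (inter_subset_inter_right hℬ𝒜)
  omega

end Shift

section Arc

variable {G : Type*} [AddCommGroupWithOne G] [DecidableEq G] {k n : ℕ}

def arc (k : ℕ) (i : G) : Finset G := (range k).image fun j : ℕ => i + j

lemma mem_arc {i x : G} : x ∈ arc k i ↔ ∃ j < k, i + j = x := by
  simp [arc]

lemma image_add_arc (i a : G) : (arc k i).image (· + a) = arc k (i + a) := by
  simp only [arc, image_image, Function.comp_def, add_right_comm]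

lemma mem_arc_sub_union_arc {i j : G} (h : (arc k i ∩ arc k j).Nonempty) :
    j ∈ arc k (i - k) ∪ arc k i := by
  obtain ⟨x, hx⟩ := h
  rw [mem_inter, mem_arc, mem_arc] at hx
  obtain ⟨⟨p, hp, rfl⟩, q, hq, hpq⟩ := hx
  have hj : j = i + p - q := eq_sub_of_add_eq hpq
  rw [mem_union, mem_arc, mem_arc]
  rcases le_or_gt q p with hqp | hpq
  · exact Or.inr ⟨p - q, by omega, by rw [hj, Nat.cast_sub hqp]; abel⟩
  · refine Or.inl ⟨k + p - q, by omega, ?_⟩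
    rw [hj, Nat.cast_sub (by omega), Nat.cast_add]
    abel

variable [CharP G n]

lemma card_arc (hkn : k ≤ n) (i : G) : #(arc k i) = k := by
  have hinj : (range k : Set ℕ).InjOn ((↑) : ℕ → G) :=
    (CharP.natCast_injOn_Iio G n).mono fun p hp => (mem_range.1 hp).trans_le hkn
  rw [arc, card_image_of_injOn fun p hp q hq h => hinj hp hq (add_left_cancel h), card_range]

lemma disjoint_arc_arc_add (hkn : 2 * k ≤ n) (i : G) : Disjoint (arc k i) (arc k (i + k)) := by
  rw [disjoint_left]
  rintro _ hx hx'
  obtain ⟨p, hp, rfl⟩ := mem_arc.1 hx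
  obtain ⟨q, hq, hqp⟩ := mem_arc.1 hx'
  have : ((k + q : ℕ) : G) = p := by
    rw [Nat.cast_add, ← add_left_cancel_iff (a := i), ← add_assoc, hqp]
  have := CharP.natCast_injOn_Iio G n (show k + q < n by omega) (show p < n by omega) this
  omega

theorem card_add_card_le_of_arcs (hkn : 2 * k ≤ n) {𝒜 ℬ : Finset G} (hℬ𝒜 : ℬ ⊆ 𝒜)
    (hℬ : ℬ.Nonempty) (hcross : ∀ i ∈ ℬ, ∀ j ∈ 𝒜, (arc k i ∩ arc k j).Nonempty) :
    #𝒜 + #ℬ ≤ 2 * k ∧ #ℬ ≤ k := by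
  obtain ⟨b, hb⟩ := hℬ
  have h𝒜 : 𝒜 ⊆ arc k (b - k) ∪ (arc k (b - k)).image (· + (k : G)) := fun j hj => by
    rw [image_add_arc, sub_add_cancel]
    exact mem_arc_sub_union_arc (hcross b hb j hj)
  have hℬ' : ∀ x ∈ ℬ, x + k ∉ 𝒜 ∧ x - k ∉ 𝒜 := fun x hx => by
    have hsub := disjoint_arc_arc_add hkn (x - k)
    rw [sub_add_cancel] at hsub
    exact ⟨fun h =>
        not_disjoint_iff_nonempty_inter.2 (hcross x hx _ h) (disjoint_arc_arc_add hkn x),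
      fun h => not_disjoint_iff_nonempty_inter.2 (hcross x hx _ h) hsub.symm⟩
  have := card_add_card_le_of_translate hℬ𝒜 h𝒜 hℬ'
  rwa [card_arc (n := n) (by omega)] at this

end Arc

section Averaging

lemma exists_perm_image_eq {α : Type*} [DecidableEq α] {S S' : Finset α} (h : #S = #S') :
    ∃ τ : Equiv.Perm α, S.image τ = S' := by
  obtain ⟨τ, hτ⟩ := (Set.powersetCard.isPretransitive (α := α) (n := #S')).exists_smul_eq
    (Set.powersetCard.ofCard h) (Set.powersetCard.ofCard rfl)
  refine ⟨τ, ?_⟩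
  have := congrArg Subtype.val hτ
  simpa [Set.powersetCard.ofCard, Finset.smul_finset_def] using this

variable {G α : Type*} [Fintype G] [Fintype α] [DecidableEq G] [DecidableEq α] {k : ℕ}

lemma card_image_eq_eq_of_card_eq (T : Finset G) {S S' : Finset α} (h : #S = #S') :
    #{σ : G ≃ α | T.image σ = S} = #{σ : G ≃ α | T.image σ = S'} := by
  obtain ⟨τ, rfl⟩ := exists_perm_image_eq h
  refine card_equiv ((Equiv.refl G).equivCongr τ) fun σ => ?_
  simp [← image_image, (image_injective τ.injective).eq_iff]

lemma card_image_eq_mul_choose {T : Finset G} {S : Finset α} (hT : #T = k) (hS : #S = k) :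
    #{σ : G ≃ α | T.image σ = S} * (Fintype.card α).choose k = Fintype.card (G ≃ α) := by
  have hfib : ∀ S' ∈ powersetCard k (univ : Finset α),
      #{σ : G ≃ α | T.image σ = S'} = #{σ : G ≃ α | T.image σ = S} := fun S' hS' =>
    card_image_eq_eq_of_card_eq T ((mem_powersetCard_univ.1 hS').trans hS.symm)
  have hmaps : ∀ σ ∈ (univ : Finset (G ≃ α)), T.image σ ∈ powersetCard k univ := fun σ _ => by
    rw [mem_powersetCard_univ, card_image_of_injective _ σ.injective, hT]
  rw [← card_univ (α := G ≃ α), card_eq_sum_card_fiberwise hmaps, sum_congr rfl hfib, sum_const,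
    card_powersetCard, card_univ, smul_eq_mul, mul_comm]

lemma card_image_mem_mul_choose {T : Finset G} {F : Finset (Finset α)} (hT : #T = k)
    (hF : (F : Set (Finset α)).Sized k) :
    #{σ : G ≃ α | T.image σ ∈ F} * (Fintype.card α).choose k = #F * Fintype.card (G ≃ α) := by
  calc _ = ∑ S ∈ F, #{σ : G ≃ α | T.image σ = S} * (Fintype.card α).choose k := by
        rw [card_eq_sum_card_fiberwise (s := {σ : G ≃ α | T.image σ ∈ F}) (t := F)
          fun σ hσ => (mem_filter.1 hσ).2, sum_mul]
        refine sum_congr rfl fun S hS => ?_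
        rw [filter_filter]
        congr 3
        ext σ
        simp only [and_iff_right_iff_imp]
        rintro rfl
        exact hS
    _ = #F * Fintype.card (G ≃ α) := by
        rw [sum_congr rfl fun S hS => card_image_eq_mul_choose hT (hF hS), sum_const, smul_eq_mul]

end Averaging

section CyclicOrder

variable {G α : Type*} [AddCommGroupWithOne G] [Fintype G] [DecidableEq G] [DecidableEq α]
  {k n : ℕ}

-- `σ` is a cyclic arrangement of `α`; these are the first points of its arcs that lie in `F`.
def arcStarts (k : ℕ) (σ : G ≃ α) (F : Finset (Finset α)) : Finset G :=
  {i | (arc k i).image σ ∈ F}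

lemma arcStarts_mono (σ : G ≃ α) {F F' : Finset (Finset α)} (h : F ⊆ F') :
    arcStarts k σ F ⊆ arcStarts k σ F' :=
  monotone_filter_right _ fun _ _ hi => h hi

lemma inter_nonempty_of_mem_arcStarts {σ : G ≃ α} {F F' : Finset (Finset α)}
    (hcross : ∀ b ∈ F, ∀ a ∈ F', (b ∩ a).Nonempty) {i j : G} (hi : i ∈ arcStarts k σ F)
    (hj : j ∈ arcStarts k σ F') : (arc k i ∩ arc k j).Nonempty := by
  have := hcross _ (mem_filter.1 hi).2 _ (mem_filter.1 hj).2
  rwa [← image_inter _ _ σ.injective, image_nonempty] at this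

theorem card_arcStarts_add_mul_card_le [CharP G n] (hkn : 2 * k ≤ n) (σ : G ≃ α)
    {A B : Finset (Finset α)} (hBA : B ⊆ A) (hcross : ∀ b ∈ B, ∀ a ∈ A, (b ∩ a).Nonempty)
    {c : ℝ} (hc : 1 ≤ c) :
    (#(arcStarts k σ A) : ℝ) + c * #(arcStarts k σ B) ≤ max (Fintype.card G : ℝ) ((c + 1) * k) := by
  rcases (arcStarts k σ B).eq_empty_or_nonempty with hB | hB
  · rw [hB, card_empty, Nat.cast_zero, mul_zero, add_zero]
    exact le_max_of_le_left (mod_cast card_le_univ _)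
  · obtain ⟨h₁, h₂⟩ := card_add_card_le_of_arcs hkn (arcStarts_mono σ hBA) hB
      fun i hi j hj => inter_nonempty_of_mem_arcStarts hcross hi hj
    have h₁' : (#(arcStarts k σ A) : ℝ) + #(arcStarts k σ B) ≤ 2 * k := mod_cast h₁
    have h₂' : (#(arcStarts k σ B) : ℝ) ≤ k := mod_cast h₂
    refine le_max_of_le_right ?_
    nlinarith

variable [Fintype α]

theorem sum_card_arcStarts_mul_choose [CharP G n] (hkn : k ≤ n) {F : Finset (Finset α)}
    (hF : (F : Set (Finset α)).Sized k) :
    (∑ σ : G ≃ α, #(arcStarts k σ F)) * (Fintype.card α).choose k =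
      Fintype.card G * (#F * Fintype.card (G ≃ α)) := by
  have hswap := sum_card_bipartiteAbove_eq_sum_card_bipartiteBelow
    (fun (σ : G ≃ α) (i : G) => (arc k i).image σ ∈ F) (s := univ) (t := univ)
  simp only [bipartiteAbove, bipartiteBelow] at hswap
  unfold arcStarts
  rw [hswap, sum_mul, sum_congr rfl fun i _ => card_image_mem_mul_choose (card_arc hkn i) hF,
    sum_const, card_univ, smul_eq_mul]

theorem mul_card_add_mul_card_le [CharP G n] (hkn : 2 * k ≤ n) {A B : Finset (Finset α)}
    (hA : (A : Set (Finset α)).Sized k) (hBA : B ⊆ A)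
    (hcross : ∀ b ∈ B, ∀ a ∈ A, (b ∩ a).Nonempty) {c : ℝ} (hc : 1 ≤ c) :
    (Fintype.card G * Fintype.card (G ≃ α) : ℝ) * (#A + c * #B) ≤
      (Fintype.card α).choose k *
        (Fintype.card (G ≃ α) * max (Fintype.card G : ℝ) ((c + 1) * k)) := by
  have hsumA : (∑ σ : G ≃ α, (#(arcStarts k σ A) : ℝ)) * (Fintype.card α).choose k =
      Fintype.card G * (#A * Fintype.card (G ≃ α)) :=
    mod_cast sum_card_arcStarts_mul_choose (by omega) hA
  have hsumB : (∑ σ : G ≃ α, (#(arcStarts k σ B) : ℝ)) * (Fintype.card α).choose k =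
      Fintype.card G * (#B * Fintype.card (G ≃ α)) :=
    mod_cast sum_card_arcStarts_mul_choose (by omega) (hA.mono (coe_subset.2 hBA))
  calc (Fintype.card G * Fintype.card (G ≃ α) : ℝ) * (#A + c * #B)
      = (Fintype.card α).choose k *
          ∑ σ : G ≃ α, ((#(arcStarts k σ A) : ℝ) + c * #(arcStarts k σ B)) := by
        rw [sum_add_distrib, ← mul_sum]
        linear_combination -hsumA - c * hsumB
    _ ≤ _ := by
        gcongr
        simpa using sum_le_card_nsmul univ _ _ fun σ _ =>
          card_arcStarts_add_mul_card_le hkn σ hBA hcross hc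

end CyclicOrder

end Katona

lemma Nat.mul_choose_eq_mul_choose_pred {n k : ℕ} (hn : 1 ≤ n) (hk : 1 ≤ k) :
    k * n.choose k = n * (n - 1).choose (k - 1) := by
  obtain ⟨m, rfl⟩ := Nat.exists_eq_add_of_le' hn
  obtain ⟨l, rfl⟩ := Nat.exists_eq_add_of_le' hk
  rw [Nat.add_sub_cancel, Nat.add_sub_cancel, Nat.add_one_mul_choose_eq, mul_comm]

theorem stmt_10 (n k : ℕ) (hn : 2 * k ≤ n) (c : ℝ) (hc : 1 ≤ c)
    (A B : Finset (Finset (Fin n)))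
    (hA : ∀ a ∈ A, a.card = k) (hBA : B ⊆ A)
    (hcross : ∀ b ∈ B, ∀ a ∈ A, (b ∩ a).Nonempty) :
    (A.card : ℝ) + c * B.card ≤
      max (n.choose k : ℝ) ((c + 1) * (n - 1).choose (k - 1)) := by
  rcases B.eq_empty_or_nonempty with rfl | ⟨b, hb⟩
  · have : (#A : ℝ) ≤ n.choose k := mod_cast (Set.Sized.card_le hA).trans_eq (by simp)
    simpa using le_max_of_le_left this
  have hk : 1 ≤ k := hA b (hBA hb) ▸ card_pos.2 (by simpa using hcross b hb b (hBA hb))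
  have : NeZero n := ⟨by omega⟩
  have key := Katona.mul_card_add_mul_card_le (G := ZMod n) hn hA hBA hcross hc
  rw [ZMod.card, Fintype.card_fin] at key
  have hchoose : (n.choose k : ℝ) * ((c + 1) * k) = n * ((c + 1) * (n - 1).choose (k - 1)) := by
    linear_combination (c + 1) * (mod_cast Nat.mul_choose_eq_mul_choose_pred (by omega) hk :
      (k : ℝ) * n.choose k = n * (n - 1).choose (k - 1))
  have hN : 0 < Fintype.card (ZMod n ≃ Fin n) :=
    Fintype.card_pos_iff.2 ⟨Fintype.equivOfCardEq (by simp)⟩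
  have hn0 : 0 < n := by omega
  refine le_of_mul_le_mul_left (key.trans_eq ?_) (by positivity)
  rw [mul_left_comm, mul_max_of_nonneg _ _ (by positivity), hchoose, mul_comm _ (n : ℝ),
    ← mul_max_of_nonneg _ _ (by positivity)]
  ring
end

section
/- Let n ≥ 2k and c ≥ 1. Suppose A, B ⊂ ([n] choose k) are cross-intersecting and |B| ≤ |A|. Then |A| + c|B| ≤ max{ binom(n,k), (c+1)*binom(n-1,k-1) }. -/
/-!
Let `D` be the `(n - 2k)`-th shadow of the family of complements of `B`. Every set of `D` misses
some member of `B`, so cross-intersection makes `D` disjoint from `A`, and `|A| + |D| ≤ C(n, k)`.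
By Kruskal–Katona, `|B| > C(n-1, k-1)` would force `|D| ≥ C(n-1, k)`, hence `|A| < |B|`; so
`|B| ≤ C(n-1, k-1)`. Comparing `B` with the colex initial segment of the same size, which lies
in `[n-1]`, the local LYM inequality on `[n-1]` gives `|B| / C(n-1, k-1) ≤ |D| / C(n-1, k)`.
Maximizing `|A| + c|B|` under these linear constraints gives the two cases of the bound,
according as `c C(n-1, k-1) ≤ C(n-1, k)` or not.
-/

open Finset FinsetFamily

namespace Finset

section Map
variable {α β : Type*} [DecidableEq α] [DecidableEq β]

theorem shadow_map (f : α ↪ β) (𝒜 : Finset (Finset α)) :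
    ∂ (𝒜.map (mapEmbedding f).toEmbedding) = (∂ 𝒜).map (mapEmbedding f).toEmbedding := by
  ext t
  simp only [mem_shadow_iff, mem_map, RelEmbedding.coe_toEmbedding, mapEmbedding_apply]
  constructor
  · rintro ⟨_, ⟨s, hs, rfl⟩, _, hfa, rfl⟩
    obtain ⟨a, ha, rfl⟩ := mem_map.1 hfa
    exact ⟨s.erase a, ⟨s, hs, a, ha, rfl⟩, map_erase f s a⟩
  · rintro ⟨_, ⟨s, hs, a, ha, rfl⟩, rfl⟩
    exact ⟨s.map f, ⟨s, hs, rfl⟩, f a, mem_map_of_mem f ha, (map_erase f s a).symm⟩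

theorem shadow_iterate_map (f : α ↪ β) (𝒜 : Finset (Finset α)) (i : ℕ) :
    ∂^[i] (𝒜.map (mapEmbedding f).toEmbedding) = (∂^[i] 𝒜).map (mapEmbedding f).toEmbedding :=
  ((Function.Semiconj.iterate_right (fun 𝒜 ↦ (shadow_map f 𝒜).symm) i) 𝒜).symm

end Map

variable {𝕜 α : Type*} [Semifield 𝕜] [LinearOrder 𝕜] [IsStrictOrderedRing 𝕜]

theorem card_div_choose_le_card_shadow_iterate_div_choose [DecidableEq α] [Fintype α]
    {𝒜 : Finset (Finset α)} {r i : ℕ} (h𝒜 : (𝒜 : Set (Finset α)).Sized r) (hi : i ≤ r) :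
    (#𝒜 : 𝕜) / (Fintype.card α).choose r ≤ #(∂^[i] 𝒜) / (Fintype.card α).choose (r - i) := by
  induction i with
  | zero => simp
  | succ i ih =>
    rw [Function.iterate_succ_apply', ← Nat.sub_sub]
    exact (ih (by omega)).trans <|
      card_div_choose_le_card_shadow_div_choose (by omega) (h𝒜.shadow_iterate (k := i))

namespace Colex
variable [LinearOrder α] {𝒜 : Finset (Finset α)} {r : ℕ}

theorem isInitSeg_powersetCard_univ [Fintype α] : IsInitSeg (powersetCard r (univ : Finset α)) r :=
  ⟨Set.sized_powersetCard _ _, fun _ _ _ ⟨_, hs⟩ ↦ mem_powersetCard.2 ⟨subset_univ _, hs⟩⟩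

theorem IsInitSeg.erase_of_forall_le {s : Finset α} (h𝒜 : IsInitSeg 𝒜 r)
    (hs : ∀ t ∈ 𝒜, toColex t ≤ toColex s) : IsInitSeg (𝒜.erase s) r := by
  refine ⟨h𝒜.1.mono (erase_subset _ _), fun t u ht hut ↦ ?_⟩
  have ht' := mem_of_mem_erase ht
  exact mem_erase.2 ⟨(hut.1.trans_le (hs t ht')).ne, h𝒜.2 ht' hut⟩

theorem IsInitSeg.exists_card_eq {b : ℕ} (h𝒜 : IsInitSeg 𝒜 r) (hb : b ≤ #𝒜) :
    ∃ 𝒞 : Finset (Finset α), IsInitSeg 𝒞 r ∧ #𝒞 = b := by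
  obtain ⟨d, hd⟩ := Nat.exists_eq_add_of_le hb
  induction d generalizing 𝒜 with
  | zero => exact ⟨𝒜, h𝒜, by omega⟩
  | succ d ih =>
    obtain ⟨s, hs, hmax⟩ := exists_max_image 𝒜 toColex (card_pos.1 (by omega))
    exact ih (h𝒜.erase_of_forall_le hmax) (by rw [card_erase_of_mem hs]; omega)
      (by rw [card_erase_of_mem hs]; omega)

theorem IsInitSeg.map_castSucc {m : ℕ} {𝒞 : Finset (Finset (Fin m))} (h𝒞 : IsInitSeg 𝒞 r) :
    IsInitSeg (𝒞.map (mapEmbedding Fin.castSuccEmb).toEmbedding) r := by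
  refine ⟨?_, ?_⟩
  · simp only [coe_map, Set.Sized, Set.mem_image, RelEmbedding.coe_toEmbedding,
      mapEmbedding_apply]
    rintro _ ⟨t, ht, rfl⟩
    rw [card_map, h𝒞.1 ht]
  rintro _ u hmap ⟨hut, hu⟩
  obtain ⟨t, ht, rfl⟩ := mem_map.1 hmap
  have hu_lt : ∀ x ∈ u, x < Fin.last m := Colex.forall_lt_mono hut.le <| by
    simp [Fin.castSucc_lt_last]
  obtain ⟨u, -, rfl⟩ := subset_map_iff.1 fun x hx ↦ by
    obtain ⟨j, rfl⟩ := Fin.exists_castSucc_eq.2 (hu_lt x hx).ne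
    exact mem_map_of_mem Fin.castSuccEmb (mem_univ j)
  refine mem_map_of_mem _ (h𝒞.2 ht ⟨?_, by simpa using hu⟩)
  simpa [map_eq_image, toColex_image_lt_toColex_image Fin.strictMono_castSucc] using hut

end Colex

theorem card_mul_choose_le_card_shadow_iterate_mul_choose {m r i : ℕ}
    {𝒜 : Finset (Finset (Fin (m + 1)))} (h𝒜 : (𝒜 : Set (Finset (Fin (m + 1)))).Sized r)
    (hcard : #𝒜 ≤ m.choose r) (hi : i ≤ r) :
    #𝒜 * m.choose (r - i) ≤ #(∂^[i] 𝒜) * m.choose r := by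
  -- A colex initial segment this small lives on `Fin m`, where LYM has ground size `m`.
  obtain ⟨𝒞, h𝒞, h𝒞card⟩ :=
    (Colex.isInitSeg_powersetCard_univ (α := Fin m)).exists_card_eq (b := #𝒜) (by simpa using hcard)
  have hKK : #(∂^[i] 𝒞) ≤ #(∂^[i] 𝒜) := by
    simpa [shadow_iterate_map] using iterated_kk h𝒜 (by simp [h𝒞card]) h𝒞.map_castSucc
  obtain h0 | hpos := (#𝒜).eq_zero_or_pos
  · simp [h0]
  have hr : r ≤ m := by
    by_contra! h
    rw [Nat.choose_eq_zero_of_lt h] at hcard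
    omega
  have hLYM := card_div_choose_le_card_shadow_iterate_div_choose (𝕜 := ℚ) h𝒞.1 hi
  rw [Fintype.card_fin, div_le_div_iff₀ (by simpa using Nat.choose_pos hr)
    (by simpa using Nat.choose_pos ((Nat.sub_le r i).trans hr)), h𝒞card] at hLYM
  exact (by exact_mod_cast hLYM : #𝒜 * m.choose (r - i) ≤ #(∂^[i] 𝒞) * m.choose r).trans
    (Nat.mul_le_mul_right _ hKK)

theorem disjoint_shadow_iterate_compls [Fintype α] [DecidableEq α] {𝒜 ℬ : Finset (Finset α)}
    (h : ∀ a ∈ 𝒜, ∀ b ∈ ℬ, (a ∩ b).Nonempty) (i : ℕ) : Disjoint 𝒜 (∂^[i] ℬᶜˢ) :=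
  disjoint_left.2 fun a ha ha' ↦ by
    obtain ⟨b, hb, hab, -⟩ := mem_shadow_iterate_iff_exists_sdiff.1 ha'
    rw [mem_compls] at hb
    exact (h a ha _ hb).ne_empty <|
      disjoint_iff_inter_eq_empty.1 (disjoint_of_subset_left hab disjoint_compl_right)

theorem card_add_card_shadow_iterate_compls_le [Fintype α] [DecidableEq α]
    {𝒜 ℬ : Finset (Finset α)} {k : ℕ} (h𝒜 : (𝒜 : Set (Finset α)).Sized k)
    (hℬ : (ℬ : Set (Finset α)).Sized k) (hk : 2 * k ≤ Fintype.card α)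
    (h : ∀ a ∈ 𝒜, ∀ b ∈ ℬ, (a ∩ b).Nonempty) :
    #𝒜 + #(∂^[Fintype.card α - 2 * k] ℬᶜˢ) ≤ (Fintype.card α).choose k := by
  rw [← card_union_of_disjoint (disjoint_shadow_iterate_compls h _)]
  refine Set.Sized.card_le ?_
  rw [coe_union, Set.sized_union]
  refine ⟨h𝒜, ?_⟩
  convert hℬ.compls.shadow_iterate using 1
  omega

section CrossIntersecting
variable {m k : ℕ} {𝒜 ℬ : Finset (Finset (Fin (m + 1)))}

theorem card_le_choose_pred_of_card_le_card (h𝒜 : (𝒜 : Set (Finset (Fin (m + 1)))).Sized k)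
    (hℬ : (ℬ : Set (Finset (Fin (m + 1)))).Sized k) (hkm : 2 * k ≤ m + 1) (hk : 0 < k)
    (h : ∀ a ∈ 𝒜, ∀ b ∈ ℬ, (a ∩ b).Nonempty) (hℬ𝒜 : #ℬ ≤ #𝒜) : #ℬ ≤ m.choose (k - 1) := by
  by_contra! hlt
  have hsymm : m.choose (m + 1 - k) = m.choose (k - 1) := Nat.choose_symm_of_eq_add (by omega)
  have hAD := card_add_card_shadow_iterate_compls_le h𝒜 hℬ (by simpa) h
  have hKK := kruskal_katona_lovasz_form (i := m + 1 - 2 * k) (r := m + 1 - k) (k := m) (𝒜 := ℬᶜˢ)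
    (by omega) (by omega) m.le_succ (by simpa using hℬ.compls)
    (by rw [card_compls, hsymm]; omega)
  rw [show m + 1 - k - (m + 1 - 2 * k) = k by omega] at hKK
  rw [Fintype.card_fin, Nat.choose_succ_left m k hk] at hAD
  omega

theorem card_mul_choose_le_card_shadow_iterate_compls_mul_choose
    (hℬ : (ℬ : Set (Finset (Fin (m + 1)))).Sized k) (hkm : 2 * k ≤ m + 1) (hk : 0 < k)
    (hcard : #ℬ ≤ m.choose (k - 1)) :
    #ℬ * m.choose k ≤ #(∂^[m + 1 - 2 * k] ℬᶜˢ) * m.choose (k - 1) := by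
  have hsymm : m.choose (m + 1 - k) = m.choose (k - 1) := Nat.choose_symm_of_eq_add (by omega)
  have h := card_mul_choose_le_card_shadow_iterate_mul_choose (i := m + 1 - 2 * k) (r := m + 1 - k)
    (𝒜 := ℬᶜˢ) (by simpa using hℬ.compls) (by rwa [card_compls, hsymm]) (by omega)
  rwa [show m + 1 - k - (m + 1 - 2 * k) = k by omega, card_compls, hsymm] at h

end CrossIntersecting

end Finset

theorem add_mul_le_max_of_mul_le_mul {𝕜 : Type*} [Field 𝕜] [LinearOrder 𝕜] [IsStrictOrderedRing 𝕜]
    {a b c d S T : 𝕜} (had : a + d ≤ S + T) (hb : 0 ≤ b) (hbS : b ≤ S) (hS : 0 < S)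
    (hbd : b * T ≤ d * S) : a + c * b ≤ max (S + T) ((c + 1) * S) := by
  rcases le_or_gt (c * S) T with hcS | hcS
  · have : c * b ≤ d := le_of_mul_le_mul_right (by nlinarith) hS
    exact le_max_of_le_left (by linarith)
  · have : c * b - d ≤ c * S - T := le_of_mul_le_mul_right (by nlinarith) hS
    exact le_max_of_le_right (by linarith)

theorem stmt_12_general (n k : ℕ) (hn : 2 * k ≤ n) (c : ℝ)
    (A B : Finset (Finset (Fin n)))
    (hA : ∀ a ∈ A, a.card = k) (hB : ∀ b ∈ B, b.card = k)
    (hBA : B.card ≤ A.card)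
    (hcross : ∀ a ∈ A, ∀ b ∈ B, (a ∩ b).Nonempty) :
    (A.card : ℝ) + c * B.card ≤
      max (n.choose k : ℝ) ((c + 1) * (n - 1).choose (k - 1)) := by
  rcases B.eq_empty_or_nonempty with rfl | ⟨b₀, hb₀⟩
  · have hA' : #A ≤ n.choose k := by simpa using Set.Sized.card_le (𝒜 := A) hA
    simp only [card_empty, Nat.cast_zero, mul_zero, add_zero]
    exact le_max_of_le_left (by exact_mod_cast hA')
  obtain ⟨a₀, ha₀⟩ := card_pos.1 ((card_pos.2 ⟨b₀, hb₀⟩).trans_le hBA)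
  have hk : 0 < k := Nat.pos_of_ne_zero fun hk ↦ by
    simpa [card_eq_zero.1 ((hA a₀ ha₀).trans hk)] using hcross a₀ ha₀ b₀ hb₀
  obtain ⟨m, rfl⟩ : ∃ m, n = m + 1 := ⟨n - 1, by omega⟩
  have hAD := card_add_card_shadow_iterate_compls_le hA hB (by simpa) hcross
  have hBS := card_le_choose_pred_of_card_le_card hA hB hn hk hcross hBA
  have hLYM := card_mul_choose_le_card_shadow_iterate_compls_mul_choose hB hn hk hBS
  rw [Fintype.card_fin, Nat.choose_succ_left m k hk] at hAD
  rw [Nat.add_sub_cancel, Nat.choose_succ_left m k hk]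
  push_cast
  exact add_mul_le_max_of_mul_le_mul (d := ((#(∂^[m + 1 - 2 * k] Bᶜˢ) : ℕ) : ℝ))
    (by exact_mod_cast hAD) (by positivity) (by exact_mod_cast hBS)
    (by exact_mod_cast Nat.choose_pos (by omega)) (by exact_mod_cast hLYM)

theorem stmt_12 (n k : ℕ) (hn : 2 * k ≤ n) (c : ℝ) (hc : 1 ≤ c)
    (A B : Finset (Finset (Fin n)))
    (hA : ∀ a ∈ A, a.card = k) (hB : ∀ b ∈ B, b.card = k)
    (hBA : B.card ≤ A.card)
    (hcross : ∀ a ∈ A, ∀ b ∈ B, (a ∩ b).Nonempty) :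
    (A.card : ℝ) + c * B.card ≤
      max (n.choose k : ℝ) ((c + 1) * (n - 1).choose (k - 1)) :=
  stmt_12_general n k hn c A B hA hB hBA hcross
end

section
/- Let a + b ≤ n, and let A be an a-element and B a b-element subset of [n]. Then the initial segments L(A,a) and L(B,b) of the lexicographic order are cross-intersecting if and only if A and B intersect strongly, i.e. there is j with A ∩ B ∩ [j] = {j} and A ∪ B ⊇ [j]. -/
/-- the lexicographic (colex-style) order of the paper: `A < B` iff `B ⊆ A` or the
minimal element of `A \ B` is smaller than the minimal element of `B \ A`.
(Note `A < A` holds.) -/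
def lexLe (A B : Finset ℕ) : Prop :=
  B ⊆ A ∨ (A \ B).min < (B \ A).min

/-- `L n t S` : the `t`-element subsets of `[n] = {1,…,n}` preceding `S`. -/
def L (n t : ℕ) (S : Finset ℕ) : Set (Finset ℕ) :=
  {T | T ⊆ Finset.Icc 1 n ∧ T.card = t ∧ lexLe T S}

/-- `S` and `T` intersect strongly. -/
def StrongInt (S T : Finset ℕ) : Prop :=
  ∃ j : ℕ, 1 ≤ j ∧ S ∩ T ∩ Finset.Icc 1 j = {j} ∧ Finset.Icc 1 j ⊆ S ∪ T

/-!
If `A` and `B` intersect strongly at `j`, then any `S ≤ A` and `T ≤ B` that were disjoint would,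
by induction along `[1, j)`, have to agree with `A` and `B` there (every element of `[1, j)` lies in
exactly one of `A`, `B`, and the lexicographic order forces it into the corresponding set), and then
both would contain `j`.

Conversely, if `A` and `B` do not intersect strongly but meet, let `c = min (A ∩ B)`; the interval
`[1, c]` then has a first gap `m ∉ A ∪ B`, with `m < c`. Any `a`-set `S ⊆ [n] \ B` containing
`[1, m] \ B` agrees with `A` below `m` and contains `m ∉ A`, so `S ≤ A`; it exists because
`|[n] \ B| = n - b ≥ a`. Such an `S` and `B` itself violate cross-intersection (as do `A` and `B`
when they are disjoint).
-/

open Finset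

theorem lexLe.mem_of_agree {X Y : Finset ℕ} {i : ℕ} (h : lexLe X Y)
    (hagree : ∀ x < i, x ∈ X ↔ x ∈ Y) (hi : i ∈ Y) : i ∈ X := by
  rcases h with hYX | hmin
  · exact hYX hi
  by_contra hiX
  have hle : (i : WithTop ℕ) ≤ (X \ Y).min := Finset.le_min fun x hx => by
    rw [mem_sdiff] at hx
    exact WithTop.coe_le_coe.2 (not_lt.1 fun hxi => hx.2 ((hagree x hxi).1 hx.1))
  exact (hmin.trans_le (min_le (mem_sdiff.2 ⟨hi, hiX⟩))).not_ge hle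

theorem lexLe_of_agree {S A : Finset ℕ} {m : ℕ} (hagree : ∀ x < m, x ∈ S ↔ x ∈ A)
    (hmS : m ∈ S) (hmA : m ∉ A) : lexLe S A := by
  right
  have hlt : ((m + 1 : ℕ) : WithTop ℕ) ≤ (A \ S).min := Finset.le_min fun y hy => by
    rw [mem_sdiff] at hy
    have hym : y ≠ m := by rintro rfl; exact hmA hy.1
    have hmy : ¬ y < m := fun hym' => hy.2 ((hagree y hym').2 hy.1)
    exact WithTop.coe_le_coe.2 (show m + 1 ≤ y by omega)
  calc (S \ A).min ≤ m := min_le (mem_sdiff.2 ⟨hmS, hmA⟩)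
    _ < ((m + 1 : ℕ) : WithTop ℕ) := WithTop.coe_lt_coe.2 m.lt_succ_self
    _ ≤ (A \ S).min := hlt

theorem agree_of_lexLe_of_disjoint {S T A B : Finset ℕ} (hSA : lexLe S A) (hTB : lexLe T B)
    (hST : Disjoint S T) {k : ℕ} (hk : ∀ i < k, i ∈ S ∪ T → i ∈ A ∪ B) :
    ∀ i < k, (i ∈ S ↔ i ∈ A) ∧ (i ∈ T ↔ i ∈ B) := by
  induction k with
  | zero => simp
  | succ k ih =>
    have ih := ih fun i hi => hk i (by omega)
    intro i hi
    rcases Nat.lt_succ_iff_lt_or_eq.1 hi with hik | rfl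
    · exact ih i hik
    have hA : i ∈ A → i ∈ S := hSA.mem_of_agree fun x hx => (ih x hx).1
    have hB : i ∈ B → i ∈ T := hTB.mem_of_agree fun x hx => (ih x hx).2
    have hcover := hk i hi
    simp only [mem_union] at hcover
    have hdisj := disjoint_left.1 hST
    exact ⟨⟨fun h => (hcover (Or.inl h)).resolve_right fun hiB => hdisj h (hB hiB), hA⟩,
      ⟨fun h => (hcover (Or.inr h)).resolve_left fun hiA => hdisj (hA hiA) h, hB⟩⟩

theorem StrongInt.inter_nonempty_of_lexLe {A B S T : Finset ℕ} (hAB : StrongInt A B)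
    (hSA : lexLe S A) (hTB : lexLe T B) (hS : 0 ∉ S) (hT : 0 ∉ T) : (S ∩ T).Nonempty := by
  obtain ⟨j, -, hjAB, hjcover⟩ := hAB
  have hj : j ∈ A ∩ B := mem_of_mem_inter_left (hjAB ▸ mem_singleton_self j)
  rw [← not_disjoint_iff_nonempty_inter]
  intro hST
  have hagree := agree_of_lexLe_of_disjoint hSA hTB hST (k := j) fun i hi hiST => by
    have hi0 : i ≠ 0 := by rintro rfl; rcases mem_union.1 hiST with h | h <;> contradiction
    exact hjcover (mem_Icc.2 ⟨Nat.one_le_iff_ne_zero.2 hi0, hi.le⟩)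
  exact disjoint_left.1 hST (hSA.mem_of_agree (fun x hx => (hagree x hx).1) (mem_inter.1 hj).1)
    (hTB.mem_of_agree (fun x hx => (hagree x hx).2) (mem_inter.1 hj).2)

theorem exists_gap_of_not_strongInt {A B : Finset ℕ} (hA : 0 ∉ A) (hAB : (A ∩ B).Nonempty)
    (h : ¬ StrongInt A B) :
    ∃ m ∉ A ∪ B, 0 < m ∧ (∃ c ∈ A, m < c) ∧ ∀ x, 0 < x → x < m → (x ∈ A ↔ x ∉ B) := by
  set c := (A ∩ B).min' hAB
  have hc : c ∈ A ∩ B := min'_mem _ _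
  have hcA := (mem_inter.1 hc).1
  have hc0 : 0 < c := Nat.pos_of_ne_zero fun h0 => hA (h0 ▸ hcA)
  have hcmin : ∀ x ∈ A, x ∈ B → c ≤ x := fun x hxA hxB => min'_le _ _ (mem_inter.2 ⟨hxA, hxB⟩)
  have hgap : ∃ m, 0 < m ∧ m ≤ c ∧ m ∉ A ∪ B := by
    by_contra! hcover
    refine h ⟨c, hc0, ?_, fun x hx => ?_⟩
    · ext x
      simp only [mem_inter, mem_Icc, mem_singleton]
      constructor
      · rintro ⟨⟨hxA, hxB⟩, -, hxc⟩
        exact le_antisymm hxc (hcmin x hxA hxB)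
      · rintro rfl
        exact ⟨mem_inter.1 hc, hc0, le_rfl⟩
    · exact hcover x (mem_Icc.1 hx).1 (mem_Icc.1 hx).2
  obtain ⟨hm0, hm_le, hmAB⟩ := Nat.find_spec hgap
  have hmc : Nat.find hgap < c :=
    hm_le.lt_of_ne fun h => hmAB (mem_union_left _ (h.symm ▸ hcA))
  refine ⟨Nat.find hgap, hmAB, hm0, ⟨c, hcA, hmc⟩, fun x hx0 hxm => ?_⟩
  have hx : x ∈ A ∪ B := by
    by_contra hx
    exact Nat.find_min hgap hxm ⟨hx0, by omega, hx⟩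
  rw [mem_union] at hx
  exact ⟨fun hxA hxB => by have := hcmin x hxA hxB; omega, hx.resolve_right⟩

theorem exists_mem_L_disjoint_of_gap {n a b m : ℕ} {A B : Finset ℕ} (hab : a + b ≤ n)
    (hA : A ⊆ Icc 1 n) (hB : B ⊆ Icc 1 n) (hAa : #A = a) (hBb : #B = b) (hm : m ∉ A ∪ B)
    (hm0 : 0 < m) (hc : ∃ c ∈ A, m < c) (hgap : ∀ x, 0 < x → x < m → (x ∈ A ↔ x ∉ B)) :
    ∃ S ∈ L n a A, Disjoint S B := by
  obtain ⟨c, hcA, hmc⟩ := hc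
  have hmn : m ≤ n := by have := mem_Icc.1 (hA hcA); omega
  rw [mem_union, not_or] at hm
  set W := Icc 1 n \ B
  have hprefix : W.filter (· ≤ m) ⊆ insert m (A.filter (· < m)) := fun x hx => by
    simp only [W, mem_filter, mem_sdiff, mem_Icc] at hx
    rcases hx.2.lt_or_eq with hxm | rfl
    · exact mem_insert_of_mem (mem_filter.2 ⟨(hgap x (by omega) hxm).2 hx.1.2, hxm⟩)
    · exact mem_insert_self _ _
  have hprefix_card : #(W.filter (· ≤ m)) ≤ a := by
    have : #(A.filter (· < m)) < a :=
      hAa ▸ card_lt_card (filter_ssubset.2 ⟨c, hcA, by omega⟩)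
    exact (card_le_card hprefix).trans ((card_insert_le _ _).trans this)
  have hW_card : a ≤ #W := by
    rw [card_sdiff_of_subset hB, Nat.card_Icc]
    omega
  obtain ⟨S, hWS, hSW, hSa⟩ := exists_subsuperset_card_eq (filter_subset _ W) hprefix_card hW_card
  have hSsub : S ⊆ Icc 1 n := hSW.trans sdiff_subset
  have hmS : m ∈ S := hWS (mem_filter.2 ⟨mem_sdiff.2 ⟨mem_Icc.2 ⟨hm0, hmn⟩, hm.2⟩, le_rfl⟩)
  have hagree : ∀ x < m, x ∈ S ↔ x ∈ A := fun x hxm => by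
    rcases Nat.eq_zero_or_pos x with rfl | hx0
    · exact iff_of_false (fun h => by simpa using hSsub h) (fun h => by simpa using hA h)
    have hxW : x ∈ W ↔ x ∉ B := by simp [W, show x ∈ Icc 1 n from mem_Icc.2 ⟨hx0, by omega⟩]
    rw [hgap x hx0 hxm, ← hxW]
    exact ⟨fun h => hSW h, fun h => hWS (mem_filter.2 ⟨h, hxm.le⟩)⟩
  exact ⟨S, ⟨hSsub, hSa, lexLe_of_agree hagree hmS hm.1⟩,
    disjoint_left.2 fun x hxS => (mem_sdiff.1 (hSW hxS)).2⟩

theorem stmt_13 (n a b : ℕ) (hab : a + b ≤ n)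
    (A B : Finset ℕ) (hA : A ⊆ Finset.Icc 1 n) (hB : B ⊆ Finset.Icc 1 n)
    (hAa : A.card = a) (hBb : B.card = b) :
    (∀ S ∈ L n a A, ∀ T ∈ L n b B, (S ∩ T).Nonempty) ↔ StrongInt A B := by
  have zero_notMem {C : Finset ℕ} (hC : C ⊆ Icc 1 n) : 0 ∉ C := fun h => by simpa using hC h
  have hBL : B ∈ L n b B := ⟨hB, hBb, Or.inl subset_rfl⟩
  constructor
  · intro hcross
    by_contra hAB
    rcases (A ∩ B).eq_empty_or_nonempty with hAB' | hAB'
    · simpa [hAB'] using hcross A ⟨hA, hAa, Or.inl subset_rfl⟩ B hBL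
    obtain ⟨m, hm, hm0, hc, hgap⟩ := exists_gap_of_not_strongInt (zero_notMem hA) hAB' hAB
    obtain ⟨S, hS, hSB⟩ := exists_mem_L_disjoint_of_gap hab hA hB hAa hBb hm hm0 hc hgap
    exact not_disjoint_iff_nonempty_inter.2 (hcross S hS B hBL) hSB
  · rintro hAB S ⟨hS, -, hSA⟩ T ⟨hT, -, hTB⟩
    exact hAB.inter_nonempty_of_lexLe hSA hTB (zero_notMem hS) (zero_notMem hT)
end

section
/- Let a, b be positive integers with a + b ≤ n, and let P, Q ⊂ [n] be nonempty with |P| ≤ a, |Q| ≤ b, such that for some j, P ∩ Q = {j} and P ∪ Q = [j]. Then L(P,a) and L(Q,b) form a maximal pair of cross-intersecting families: no proper simultaneous enlargement of both (within ([n] choose a) and ([n] choose b) respectively) remains cross-intersecting. -/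
/-!
If `S ∉ L(P, a)`, let `i` be the first element of `P` missing from `S`; every element of `S`
below `i` then lies in `P`, hence outside `Q` (as `P ∩ Q = {j}` and `i ≤ j`). The set
`T₀ = {i} ∪ {q ∈ Q | q < i}` is disjoint from `S`, has at most `|Q| ≤ b` elements, and every
superset of it precedes `Q`; padding it with elements outside `S` (possible since `a + b ≤ n`)
gives some `T ∈ L(Q, b)` disjoint from `S`. So no set outside `L(P, a)` can be added, and by
symmetry the same holds for `L(Q, b)`.
-/

open Finset

lemma exists_forall_lt_mem_of_not_lexLe {S P : Finset ℕ} (h : ¬ lexLe S P) :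
    ∃ i ∈ P, i ∉ S ∧ ∀ s ∈ S, s < i → s ∈ P := by
  simp only [lexLe, not_or, not_lt] at h
  obtain ⟨hPS, hmin⟩ := h
  have hne : (P \ S).Nonempty := sdiff_nonempty.mpr hPS
  obtain ⟨hiP, hiS⟩ := mem_sdiff.mp (min'_mem _ hne)
  refine ⟨_, hiP, hiS, fun s hs hsi => ?_⟩
  by_contra hsP
  have : ((P \ S).min' hne : WithTop ℕ) ≤ s :=
    (coe_min' hne).trans_le (hmin.trans (min_le (mem_sdiff.mpr ⟨hs, hsP⟩)))
  exact (WithTop.coe_le_coe.mp this).not_gt hsi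

lemma lexLe_of_forall_lt_mem {T Q : Finset ℕ} {i : ℕ} (hiT : i ∈ T) (hiQ : i ∉ Q)
    (hlt : ∀ q ∈ Q, q < i → q ∈ T) : lexLe T Q := by
  by_cases hQT : Q ⊆ T
  · exact Or.inl hQT
  right
  have hne : (Q \ T).Nonempty := sdiff_nonempty.mpr hQT
  obtain ⟨hmQ, hmT⟩ := mem_sdiff.mp (min'_mem _ hne)
  have him : i < (Q \ T).min' hne := by
    rcases lt_trichotomy ((Q \ T).min' hne) i with h | h | h
    · exact absurd (hlt _ hmQ h) hmT
    · exact absurd (h ▸ hmQ) hiQ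
    · exact h
  calc (T \ Q).min ≤ i := min_le (mem_sdiff.mpr ⟨hiT, hiQ⟩)
    _ < (Q \ T).min' hne := WithTop.coe_lt_coe.mpr him
    _ = (Q \ T).min := coe_min' hne

lemma lexLe_of_insert_filter_lt_subset {T Q : Finset ℕ} {i : ℕ}
    (hmax : i ∈ Q → ∀ q ∈ Q, q ≤ i) (hT : insert i (Q.filter (· < i)) ⊆ T) : lexLe T Q := by
  have hiT : i ∈ T := hT (mem_insert_self _ _)
  have hlt : ∀ q ∈ Q, q < i → q ∈ T := fun q hq hqi =>
    hT (mem_insert_of_mem (mem_filter.mpr ⟨hq, hqi⟩))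
  by_cases hiQ : i ∈ Q
  · exact Or.inl fun q hq => (hmax hiQ q hq).lt_or_eq.elim (hlt q hq) (· ▸ hiT)
  · exact lexLe_of_forall_lt_mem hiT hiQ hlt

lemma exists_superset_card_eq_disjoint {α : Type*} [DecidableEq α] {U S T₀ : Finset α}
    {b : ℕ} (hS : S ⊆ U) (hT₀ : T₀ ⊆ U) (hST₀ : Disjoint S T₀) (hT₀b : #T₀ ≤ b)
    (hb : #S + b ≤ #U) : ∃ T, T₀ ⊆ T ∧ T ⊆ U ∧ #T = b ∧ Disjoint S T := by
  have hT₀U : T₀ ⊆ U \ S := fun x hx => mem_sdiff.mpr ⟨hT₀ hx, disjoint_right.mp hST₀ hx⟩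
  have hbU : b ≤ #(U \ S) := by
    rw [card_sdiff_of_subset hS]
    omega
  obtain ⟨T, hT₀T, hTU, hTb⟩ := exists_subsuperset_card_eq hT₀U hT₀b hbU
  exact ⟨T, hT₀T, hTU.trans sdiff_subset, hTb,
    disjoint_left.mpr fun x hxS hxT => (mem_sdiff.mp (hTU hxT)).2 hxS⟩

lemma exists_disjoint_mem_L_of_not_lexLe {n a b : ℕ} (hab : a + b ≤ n) {P Q : Finset ℕ}
    (hQ : Q ⊆ Icc 1 n) (hQb : #Q ≤ b) {j : ℕ} (hPQ : P ∩ Q = {j})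
    (hPQU : P ∪ Q = Icc 1 j) {S : Finset ℕ} (hS : S ⊆ Icc 1 n) (hSa : #S = a)
    (hSP : ¬ lexLe S P) : ∃ T ∈ L n b Q, Disjoint S T := by
  obtain ⟨i, hiP, hiS, hSltP⟩ := exists_forall_lt_mem_of_not_lexLe hSP
  have hjQ : j ∈ Q := mem_of_mem_inter_right (hPQ ▸ mem_singleton_self j)
  have hle_j : ∀ x ∈ P ∪ Q, 1 ≤ x ∧ x ≤ j := fun x hx => mem_Icc.mp (hPQU ▸ hx)
  have hij : i ≤ j := (hle_j i (mem_union_left _ hiP)).2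
  have hin : i ∈ Icc 1 n := mem_Icc.mpr
    ⟨(hle_j i (mem_union_left _ hiP)).1, hij.trans (mem_Icc.mp (hQ hjQ)).2⟩
  set T₀ := insert i (Q.filter (· < i))
  have hT₀S : Disjoint S T₀ := by
    refine disjoint_left.mpr fun x hxS hxT => ?_
    rcases mem_insert.mp hxT with rfl | hxQ
    · exact hiS hxS
    · obtain ⟨hxQ, hxi⟩ := mem_filter.mp hxQ
      have : x = j := mem_singleton.mp (hPQ ▸ mem_inter.mpr ⟨hSltP x hxS hxi, hxQ⟩)
      omega
  have hT₀b : #T₀ ≤ b := by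
    have hfilter : Q.filter (· < i) ⊆ Q.erase j := fun x hx => by
      obtain ⟨hxQ, hxi⟩ := mem_filter.mp hx
      exact mem_erase.mpr ⟨by omega, hxQ⟩
    calc #T₀ ≤ #(Q.filter (· < i)) + 1 := card_insert_le _ _
      _ ≤ #(Q.erase j) + 1 := by grw [hfilter]
      _ = #Q := card_erase_add_one hjQ
      _ ≤ b := hQb
  have hmax : i ∈ Q → ∀ q ∈ Q, q ≤ i := fun hiQ q hq => by
    have : i = j := mem_singleton.mp (hPQ ▸ mem_inter.mpr ⟨hiP, hiQ⟩)
    exact this ▸ (hle_j q (mem_union_right _ hq)).2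
  obtain ⟨T, hT₀T, hTn, hTb, hST⟩ := exists_superset_card_eq_disjoint hS
    (insert_subset hin ((filter_subset _ _).trans hQ)) hT₀S hT₀b (by simp [hSa, hab])
  exact ⟨T, ⟨hTn, hTb, lexLe_of_insert_filter_lt_subset hmax hT₀T⟩, hST⟩

lemma eq_L_of_forall_not_lexLe_exists_disjoint {n a : ℕ} {P : Finset ℕ}
    {A B : Set (Finset ℕ)} (hA : ∀ S ∈ A, S ⊆ Icc 1 n ∧ #S = a) (hLA : L n a P ⊆ A)
    (hcross : ∀ S ∈ A, ∀ T ∈ B, (S ∩ T).Nonempty)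
    (hblock : ∀ S ⊆ Icc 1 n, #S = a → ¬ lexLe S P → ∃ T ∈ B, Disjoint S T) :
    A = L n a P := by
  refine Set.Subset.antisymm ?_ hLA
  intro S hSA
  obtain ⟨hS, hSa⟩ := hA S hSA
  by_contra hSL
  obtain ⟨T, hTB, hST⟩ := hblock S hS hSa fun h => hSL ⟨hS, hSa, h⟩
  exact (disjoint_iff_inter_eq_empty.mp hST ▸ hcross S hSA T hTB).ne_empty rfl

theorem stmt_14_general (n a b : ℕ) (hab : a + b ≤ n)
    (P Q : Finset ℕ) (hP : P ⊆ Finset.Icc 1 n) (hQ : Q ⊆ Finset.Icc 1 n)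
    (hPa : P.card ≤ a) (hQb : Q.card ≤ b)
    (j : ℕ) (hPQ : P ∩ Q = {j}) (hPQU : P ∪ Q = Finset.Icc 1 j) :
    ∀ A' B' : Set (Finset ℕ),
      (∀ S ∈ A', S ⊆ Finset.Icc 1 n ∧ S.card = a) →
      (∀ T ∈ B', T ⊆ Finset.Icc 1 n ∧ T.card = b) →
      L n a P ⊆ A' → L n b Q ⊆ B' →
      (∀ S ∈ A', ∀ T ∈ B', (S ∩ T).Nonempty) →
      A' = L n a P ∧ B' = L n b Q := by
  intro A' B' hA hB hLA hLB hcross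
  constructor
  · refine eq_L_of_forall_not_lexLe_exists_disjoint hA hLA hcross fun S hS hSa hSP => ?_
    obtain ⟨T, hT, hST⟩ := exists_disjoint_mem_L_of_not_lexLe hab hQ hQb hPQ hPQU hS hSa hSP
    exact ⟨T, hLB hT, hST⟩
  · refine eq_L_of_forall_not_lexLe_exists_disjoint hB hLB
      (fun T hT S hS => inter_comm S T ▸ hcross S hS T hT) fun T hT hTb hTQ => ?_
    obtain ⟨S, hS, hTS⟩ := exists_disjoint_mem_L_of_not_lexLe (by omega) hP hPa
      (inter_comm P Q ▸ hPQ) (union_comm P Q ▸ hPQU) hT hTb hTQ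
    exact ⟨S, hLA hS, hTS⟩

theorem stmt_14 (n a b : ℕ) (ha : 1 ≤ a) (hb : 1 ≤ b) (hab : a + b ≤ n)
    (P Q : Finset ℕ) (hP : P ⊆ Finset.Icc 1 n) (hQ : Q ⊆ Finset.Icc 1 n)
    (hPne : P.Nonempty) (hQne : Q.Nonempty)
    (hPa : P.card ≤ a) (hQb : Q.card ≤ b)
    (j : ℕ) (hPQ : P ∩ Q = {j}) (hPQU : P ∪ Q = Finset.Icc 1 j) :
    ∀ A' B' : Set (Finset ℕ),
      (∀ S ∈ A', S ⊆ Finset.Icc 1 n ∧ S.card = a) →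
      (∀ T ∈ B', T ⊆ Finset.Icc 1 n ∧ T.card = b) →
      L n a P ⊆ A' → L n b Q ⊆ B' →
      (∀ S ∈ A', ∀ T ∈ B', (S ∩ T).Nonempty) →
      A' = L n a P ∧ B' = L n b Q :=
  stmt_14_general n a b hab P Q hP hQ hPa hQb j hPQ hPQU
end

section
/- For 2k ≤ n ≤ 3k-1, every intersecting family F ⊂ V(n,k,1) satisfies |F| ≤ k*binom(n-1,k); i.e., m(n,k,1) = k*binom(n-1,k) in this range. -/
open Finset Equiv Nat

/-!
Katona's cyclic method. Place the coordinates on a cycle by a bijection `σ` and look at the `n`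
rotations of the arc vector: `+1` on an arc of length `k`, `-1` at distance `k` before its start.
Two rotations at offset `d ∈ [k, n - k]` have disjoint arcs, each `-1` landing on the other arc
because `n ≤ 3k - 1`, so their scalar product is `-2`; hence an intersecting family contains at
most `k` of the rotations. Every vector of `V n k 1` is a given rotation for exactly
`k! (n - k - 1)!` bijections, so counting pairs (bijection, rotation in `F`) gives
`|F| · n · k! (n - k - 1)! ≤ n! · k`. The family `{v | v₀ = 1}` attains the bound: two of its
members share a `+1`, so their scalar product is at least `1 - 1 - 1`.
-/

theorem Finset.card_mul_le_of_card_fiber_eq {G S X : Type*} [Fintype G] [Fintype S]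
    [DecidableEq X] (f : G → S → X) (F : Finset X) {k K : ℕ} (hk : ∀ g, #{s | f g s ∈ F} ≤ k)
    (hK : ∀ s, ∀ x ∈ F, #{g | f g s = x} = K) :
    #F * (Fintype.card S * K) ≤ Fintype.card G * k := by
  have hswap : ∑ g, #{s | f g s ∈ F} = ∑ s, ∑ x ∈ F, #{g | f g s = x} := by
    have hind : ∀ g s, (if f g s ∈ F then 1 else 0) = ∑ x ∈ F, if f g s = x then 1 else 0 :=
      fun g s => (sum_ite_eq F (f g s) fun _ => 1).symm
    simp only [card_filter, hind]
    rw [sum_comm]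
    exact sum_congr rfl fun s _ => sum_comm
  calc #F * (Fintype.card S * K) = ∑ s, ∑ x ∈ F, #{g | f g s = x} := by
        simp [sum_congr rfl (hK _)]; ring
    _ = ∑ g, #{s | f g s ∈ F} := hswap.symm
    _ ≤ ∑ _g : G, k := sum_le_sum fun g _ => hk g
    _ = Fintype.card G * k := by simp

theorem Equiv.card_comp_eq_eq_card_stabilizer {α β ι : Type*} [Fintype α] [Fintype β]
    [DecidableEq α] [DecidableEq β] [DecidableEq ι] (v : α → ι) (w : β → ι)
    (h : ∀ i, Fintype.card {a // v a = i} = Fintype.card {b // w b = i}) :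
    Fintype.card {π : α ≃ β // w ∘ π = v} = Fintype.card {g : Perm α // v ∘ g = v} := by
  set π₀ : α ≃ β := ofFiberEquiv fun i => Fintype.equivOfCardEq (h i)
  have hπ₀ : w ∘ π₀ = v := funext (ofFiberEquiv_map _)
  refine Fintype.card_congr ((Equiv.refl α).equivCongr π₀.symm |>.subtypeEquiv fun π => ?_)
  have : v ∘ ((Equiv.refl α).equivCongr π₀.symm π) = w ∘ π := by
    funext a; simp [← hπ₀]
  rw [this]

section FamilyV

variable {n k l : ℕ}

lemma card_filter_eq_zero_of_mem_V {v : Fin n → ℤ} (hv : v ∈ V n k l) :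
    #{i | v i = 0} = n - k - l := by
  obtain ⟨hval, h1, hm⟩ := hv
  have h0 : univ.filter (fun i => v i = 0) = univ.filter fun i => ¬(v i = 1 ∨ v i = -1) :=
    filter_congr fun i _ => by rcases hval i with h | h | h <;> simp [h]
  have hdisj : Disjoint (univ.filter fun i => v i = 1) (univ.filter fun i => v i = -1) :=
    disjoint_filter.2 fun i _ h => by simp [h]
  rw [h0, filter_not, filter_or, card_sdiff_of_subset (subset_univ _),
    card_union_of_disjoint hdisj, h1, hm, Finset.card_univ, Fintype.card_fin]
  omega

lemma card_fiber_eq_of_mem_V {v w : Fin n → ℤ} (hv : v ∈ V n k l) (hw : w ∈ V n k l) (i : ℤ) :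
    Fintype.card {a // v a = i} = Fintype.card {a // w a = i} := by
  rw [Fintype.card_subtype, Fintype.card_subtype]
  by_cases h1 : i = 1
  · rw [h1, hv.2.1, hw.2.1]
  by_cases hm : i = -1
  · rw [hm, hv.2.2, hw.2.2]
  by_cases h0 : i = 0
  · rw [h0, card_filter_eq_zero_of_mem_V hv, card_filter_eq_zero_of_mem_V hw]
  rw [filter_false_of_mem fun a _ ha => by rcases hv.1 a with h | h | h <;> omega,
    filter_false_of_mem fun a _ ha => by rcases hw.1 a with h | h | h <;> omega]

lemma card_stabilizer_of_mem_V {v : Fin n → ℤ} (hv : v ∈ V n k l) :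
    Fintype.card {g : Perm (Fin n) // v ∘ g = v} = k ! * l ! * (n - k - l)! := by
  rw [DomMulAct.stabilizer_card', prod_subset (s₂ := {1, -1, 0})]
  · simp [Fintype.card_subtype, hv.2.1, hv.2.2, card_filter_eq_zero_of_mem_V hv]
    ring
  · intro i hi
    obtain ⟨a, -, rfl⟩ := mem_image.1 hi
    rcases hv.1 a with h | h | h <;> simp [h]
  · intro i _ hi
    have : IsEmpty {a // v a = i} := ⟨fun a => hi (mem_image.2 ⟨a, mem_univ _, a.2⟩)⟩
    simp

lemma card_perm_comp_eq_of_mem_V {v w : Fin n → ℤ} (hv : v ∈ V n k l) (hw : w ∈ V n k l) :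
    Fintype.card {σ : Perm (Fin n) // w ∘ σ = v} = k ! * l ! * (n - k - l)! :=
  (card_comp_eq_eq_card_stabilizer v w (card_fiber_eq_of_mem_V hv hw)).trans
    (card_stabilizer_of_mem_V hv)

lemma comp_perm_mem_V {v : Fin n → ℤ} (hv : v ∈ V n k l) (σ : Perm (Fin n)) :
    v ∘ σ ∈ V n k l := by
  have hcard (c : ℤ) : #{i | (v ∘ σ) i = c} = #{i | v i = c} := by
    rw [← Fintype.card_subtype, ← Fintype.card_subtype]
    exact Fintype.card_congr (σ.subtypeEquiv fun _ => Iff.rfl)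
  exact ⟨fun i => hv.1 (σ i), (hcard 1).trans hv.2.1, (hcard (-1)).trans hv.2.2⟩

lemma finite_V (n k l : ℕ) : (V n k l).Finite :=
  (Set.Finite.pi fun _ => (Set.toFinite {0, 1, -1})).subset fun v hv i _ => by
    rcases hv.1 i with h | h | h <;> simp [h]

lemma le_dot_of_mem_V {k' l' : ℕ} {v w : Fin n → ℤ} (hv : v ∈ V n k l) (hw : w ∈ V n k' l')
    {i₀ : Fin n} (hv₀ : v i₀ = 1) (hw₀ : w i₀ = 1) : 1 - (l + l' : ℤ) ≤ dot v w := by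
  have hpt (i : Fin n) : (if i = i₀ then 1 else 0) -
      ((if v i = -1 then 1 else 0) + (if w i = -1 then 1 else 0)) ≤ v i * w i := by
    by_cases h : i = i₀
    · simp [h, hv₀, hw₀]
    rcases hv.1 i with h1 | h1 | h1 <;> rcases hw.1 i with h2 | h2 | h2 <;> simp [h, h1, h2]
  calc 1 - (l + l' : ℤ) = ∑ i, ((if i = i₀ then 1 else 0) -
        ((if v i = -1 then 1 else 0) + (if w i = -1 then 1 else 0))) := by
        simp [sum_sub_distrib, sum_add_distrib, sum_boole, hv.2.2, hw.2.2]
    _ ≤ dot v w := sum_le_sum fun i _ => hpt i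

end FamilyV

section Cyclic

variable {n k : ℕ}

theorem Fin.card_le_of_forall_sub_val_notMem_Icc (hn : 2 * k ≤ n) (S : Finset (Fin n))
    (hS : ∀ s ∈ S, ∀ t ∈ S, (t - s).val ∉ Set.Icc k (n - k)) : #S ≤ k := by
  simp only [Set.mem_Icc] at hS
  rcases S.eq_empty_or_nonempty with rfl | ⟨d, hd⟩
  · simp
  have : NeZero n := ⟨d.pos.ne'⟩
  have hk : 1 ≤ k := by
    have := hS d hd d hd
    rw [sub_self, Fin.val_zero] at this
    omega
  obtain ⟨r, hr⟩ : ∃ r : Fin n → ℕ, ∀ s, r s = (s - d).val := ⟨_, fun _ => rfl⟩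
  have hr_lt (s : Fin n) : r s < n := hr s ▸ (s - d).isLt
  have hr_inj {s t : Fin n} (h : r s = r t) : s = t :=
    sub_left_inj.1 (Fin.ext (by rw [← hr, ← hr, h]))
  have hr_pos {s : Fin n} (hs : s ∈ S.erase d) : 0 < r s := by
    rw [hr, Nat.pos_iff_ne_zero, Ne, Fin.val_eq_zero_iff, sub_eq_zero]
    exact ne_of_mem_erase hs
  have hr_near {s : Fin n} (hs : s ∈ S) : r s < k ∨ n - k < r s := by
    have := hS d hd s hs; rw [← hr] at this; omega
  have hr_far {s t : Fin n} (hs : s ∈ S) (ht : t ∈ S) : r t ≠ r s + (n - k) := by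
    intro h
    have hst : (t - s).val = n - k := by
      rw [hr, hr] at h
      rw [← sub_sub_sub_cancel_right t s d, Fin.coe_sub_iff_le.2 (Fin.le_def.2 (by omega))]
      omega
    exact hS s hs t ht (by omega)
  -- `fold` identifies the offsets `r` and `r + (n - k)`, which cannot both occur in `S`
  let fold : Fin n → ℕ := fun s => if r s < k then r s else r s + k - n
  have hmaps : ∀ s ∈ S.erase d, fold s ∈ Ico 1 k := by
    intro s hs
    have := hr_near (mem_of_mem_erase hs); have := hr_pos hs; have := hr_lt s
    simp only [fold, mem_Ico]
    split_ifs <;> omega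
  have hinj : Set.InjOn fold (S.erase d) := by
    intro s hs t ht h
    replace hs := mem_of_mem_erase hs; replace ht := mem_of_mem_erase ht
    have := hr_near hs; have := hr_near ht; have := hr_far hs ht; have := hr_far ht hs
    have := hr_lt s; have := hr_lt t
    simp only [fold] at h
    exact hr_inj (by split_ifs at h <;> omega)
  have := card_le_card_of_injOn fold hmaps hinj
  rw [Nat.card_Ico, card_erase_of_mem hd] at this
  omega

def arcVector (n k : ℕ) : Fin n → ℤ :=
  fun j => if j.val < k then 1 else if j.val = n - k then -1 else 0

lemma arcVector_mem_V (hk : 1 ≤ k) (hn : 2 * k ≤ n) : arcVector n k ∈ V n k 1 := by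
  refine ⟨fun j => by unfold arcVector; split_ifs <;> simp, ?_, ?_⟩
  · rw [filter_congr fun j _ => show arcVector n k j = 1 ↔ j.val < k by
      unfold arcVector; split_ifs <;> simp_all]
    rw [Fin.card_filter_val_lt, min_eq_right (by omega)]
  · refine card_eq_one.2 ⟨⟨n - k, by omega⟩, ?_⟩
    ext j
    rw [mem_filter, mem_singleton, Fin.ext_iff]
    simp only [arcVector, mem_univ, true_and]
    split_ifs <;> simp <;> omega

variable [NeZero n]

lemma sum_arcVector_mul_sub (hn : 2 * k ≤ n) (hn' : n + 1 ≤ 3 * k) (d : Fin n)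
    (hd : k ≤ d.val) (hd' : d.val ≤ n - k) :
    ∑ j, arcVector n k j * arcVector n k (j - d) = -2 := by
  set p : Fin n := ⟨n - k, by omega⟩
  have hprod (j : Fin n) : arcVector n k j * arcVector n k (j - d) =
      (if j = p then -1 else 0) + (if j = p + d then -1 else 0) := by
    have hp : j = p + d ↔ (j - d).val = n - k := by rw [← sub_eq_iff_eq_add, Fin.ext_iff]
    have hp₀ : j = p ↔ j.val = n - k := Fin.ext_iff
    simp only [hp, hp₀, arcVector]
    have := j.isLt
    rcases le_or_gt d j with h | h
    · rw [Fin.coe_sub_iff_le.2 h]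
      rw [Fin.le_def] at h
      split_ifs <;> omega
    · rw [Fin.coe_sub_iff_lt.2 h]
      rw [Fin.lt_def] at h
      split_ifs <;> omega
  simp [hprod, sum_add_distrib]

lemma dot_comp_sub (a : Fin n → ℤ) (σ : Perm (Fin n)) (s t : Fin n) :
    dot (fun i => a (σ i - s)) (fun i => a (σ i - t)) = ∑ j, a j * a (j - (t - s)) := by
  unfold dot
  rw [Equiv.sum_comp σ fun j => a (j - s) * a (j - t), ← Equiv.sum_comp (Equiv.addRight s)]
  simp [sub_sub_eq_add_sub]

end Cyclic

theorem ncard_le_of_intersecting {n k : ℕ} (hk : 1 ≤ k) (hn : 2 * k ≤ n) (hn' : n + 1 ≤ 3 * k)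
    {F : Set (Fin n → ℤ)} (hFV : F ⊆ V n k 1) (hF : ∀ v ∈ F, ∀ w ∈ F, dot v w ≠ -2) :
    F.ncard ≤ k * (n - 1).choose k := by
  classical
  have : NeZero n := ⟨by omega⟩
  have hfin : F.Finite := (finite_V n k 1).subset hFV
  have hcount := card_mul_le_of_card_fiber_eq
    (fun (σ : Perm (Fin n)) s i => arcVector n k (σ i - s)) hfin.toFinset
    (k := k) (K := k ! * 1 ! * (n - k - 1)!) ?_ ?_
  · rw [Fintype.card_fin, Fintype.card_perm, Fintype.card_fin,
      ← Set.ncard_eq_toFinset_card _ hfin] at hcount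
    have hfact : n ! * k = k * (n - 1).choose k * (n * (k ! * 1 ! * (n - k - 1)!)) := by
      rw [← Nat.mul_factorial_pred (by omega), ← Nat.choose_mul_factorial_mul_factorial
        (show k ≤ n - 1 by omega), show n - 1 - k = n - k - 1 by omega, factorial_one]
      ring
    rw [hfact] at hcount
    exact Nat.le_of_mul_le_mul_right hcount (Nat.mul_pos (by omega) (by positivity))
  · intro σ
    refine Fin.card_le_of_forall_sub_val_notMem_Icc hn _ fun s hs t ht hst => ?_
    rw [mem_filter, Set.Finite.mem_toFinset] at hs ht
    exact hF _ hs.2 _ ht.2 ((dot_comp_sub _ σ s t).trans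
      (sum_arcVector_mul_sub hn hn' _ hst.1 hst.2))
  · intro s x hx
    rw [← Fintype.card_subtype]
    exact card_perm_comp_eq_of_mem_V (hFV (hfin.mem_toFinset.1 hx))
      (comp_perm_mem_V (arcVector_mem_V hk hn) (Equiv.subRight s))

section SignVector

variable {n k : ℕ}

def signVector (P : Finset (Fin n)) (x : Fin n) : Fin n → ℤ :=
  fun i => if i ∈ P then 1 else if i = x then -1 else 0

lemma filter_signVector_eq_one {P : Finset (Fin n)} {x : Fin n} (hx : x ∉ P) :
    univ.filter (fun i => signVector P x i = 1) = P := by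
  ext i
  rw [mem_filter]
  simp only [signVector, mem_univ, true_and]
  split_ifs <;> simp_all

lemma filter_signVector_eq_neg_one {P : Finset (Fin n)} {x : Fin n} (hx : x ∉ P) :
    univ.filter (fun i => signVector P x i = -1) = {x} := by
  ext i
  rw [mem_filter, mem_singleton]
  simp only [signVector, mem_univ, true_and]
  split_ifs <;> simp_all
  rintro rfl; contradiction

lemma signVector_mem_V {P : Finset (Fin n)} {x : Fin n} (hx : x ∉ P) :
    signVector P x ∈ V n #P 1 :=
  ⟨fun i => by unfold signVector; split_ifs <;> simp,
    by rw [filter_signVector_eq_one hx], by rw [filter_signVector_eq_neg_one hx, card_singleton]⟩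

lemma exists_signVector_eq_of_mem_V {v : Fin n → ℤ} (hv : v ∈ V n k 1) :
    ∃ x, v x = -1 ∧ signVector (univ.filter fun i => v i = 1) x = v := by
  obtain ⟨x, hx⟩ := card_eq_one.1 hv.2.2
  have hneg (i : Fin n) : v i = -1 ↔ i = x := by
    have := Finset.ext_iff.1 hx i
    rwa [mem_filter, mem_singleton, and_iff_right (mem_univ i)] at this
  refine ⟨x, (hneg x).2 rfl, funext fun i => ?_⟩
  simp only [signVector, mem_filter, mem_univ, true_and]
  by_cases hi : i = x
  · simp [hi, (hneg x).2 rfl]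
  · have := mt (hneg i).1 hi
    rcases hv.1 i with h | h | h <;> simp [h, hi] at this ⊢

lemma signVector_injOn :
    Set.InjOn (fun p : (_ : Finset (Fin n)) × Fin n => signVector p.1 p.2) {p | p.2 ∉ p.1} := by
  rintro ⟨P, x⟩ hx ⟨P', x'⟩ hx' h
  simp only [Set.mem_ofPred_eq] at hx hx' h
  obtain rfl : P = P' := by
    rw [← filter_signVector_eq_one hx, ← filter_signVector_eq_one hx', h]
  obtain rfl : x = x' := singleton_injective <| by
    rw [← filter_signVector_eq_neg_one hx, ← filter_signVector_eq_neg_one hx', h]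
  rfl

theorem ncard_setOf_mem_V_apply_eq_one (hk : 1 ≤ k) (i₀ : Fin n) :
    {v | v ∈ V n k 1 ∧ v i₀ = 1}.ncard = k * (n - 1).choose k := by
  classical
  set D := ((powersetCard k univ).filter ({i₀} ⊆ ·)).sigma fun P => (Pᶜ : Finset (Fin n))
  have hE : {v | v ∈ V n k 1 ∧ v i₀ = 1} = ↑(D.image fun p => signVector p.1 p.2) := by
    ext v
    simp only [D, Set.mem_ofPred_eq, coe_image, Set.mem_image, mem_coe, mem_sigma, mem_filter,
      mem_powersetCard, mem_compl, singleton_subset_iff, subset_univ, true_and]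
    constructor
    · rintro ⟨hv, hv₀⟩
      obtain ⟨x, hx, hxv⟩ := exists_signVector_eq_of_mem_V hv
      refine ⟨⟨_, x⟩, ⟨⟨hv.2.1, ?_⟩, ?_⟩, hxv⟩ <;> simp [hv₀, hx]
    · rintro ⟨⟨P, x⟩, ⟨⟨hPk, hi₀⟩, hx⟩, rfl⟩
      exact ⟨hPk ▸ signVector_mem_V hx, if_pos hi₀⟩
  have hinj : Set.InjOn (fun p : (_ : Finset (Fin n)) × Fin n => signVector p.1 p.2) D :=
    signVector_injOn.mono fun _ hp => mem_compl.1 (mem_sigma.1 hp).2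
  have hcompl : ∀ P ∈ (powersetCard k univ).filter ({i₀} ⊆ ·), #(Pᶜ : Finset (Fin n)) = n - k :=
    fun P hP => by
      rw [card_compl, Fintype.card_fin, (mem_powersetCard.1 (mem_filter.1 hP).1).2]
  have hsub : #({i₀} : Finset (Fin n)) ≤ k := by rwa [card_singleton]
  rw [hE, Set.ncard_coe_finset, Finset.card_image_of_injOn hinj, card_sigma,
    sum_congr rfl hcompl, sum_const, smul_eq_mul,
    card_filter_powersetCard_subset _ _ _ (subset_univ _) hsub,
    Finset.card_univ, Fintype.card_fin, card_singleton]
  have := Nat.choose_succ_right_eq (n - 1) (k - 1)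
  rw [Nat.sub_add_cancel hk, show n - 1 - (k - 1) = n - k by have := i₀.pos; omega] at this
  rw [← this, mul_comm]

end SignVector

theorem stmt_17 (n k : ℕ) (hk : 1 ≤ k) (hn : 2 * k ≤ n) (hn' : n + 1 ≤ 3 * k) :
    (∀ F : Set (Fin n → ℤ), F ⊆ V n k 1 →
        (∀ v ∈ F, ∀ w ∈ F, dot v w ≠ -2) →
        F.ncard ≤ k * (n - 1).choose k) ∧
    (∃ F : Set (Fin n → ℤ), F ⊆ V n k 1 ∧
        (∀ v ∈ F, ∀ w ∈ F, dot v w ≠ -2) ∧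
        F.ncard = k * (n - 1).choose k) := by
  refine ⟨fun F hFV hF => ncard_le_of_intersecting hk hn hn' hFV hF, ?_⟩
  let i₀ : Fin n := ⟨0, by omega⟩
  refine ⟨{v | v ∈ V n k 1 ∧ v i₀ = 1}, fun v hv => hv.1, fun v hv w hw h => ?_,
    ncard_setOf_mem_V_apply_eq_one hk i₀⟩
  have := le_dot_of_mem_V hv.1 hw.1 hv.2 hw.2
  omega
end

section
/- For n ≥ k^2 ≥ 4, m(n+1,k,1) = m(n,k,1) + binom(n,k). -/
/-- the set of sizes of intersecting subfamilies of `V n k 1`. -/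
def interSizes (n k : ℕ) : Set ℕ :=
  {s | ∃ F : Set (Fin n → ℤ), F ⊆ V n k 1 ∧
      (∀ v ∈ F, ∀ w ∈ F, dot v w ≠ -2) ∧ F.ncard = s}

/-!
The lower bound lifts an extremal family of `V n k 1` by a zero coordinate and adds all `C(n, k)`
vectors with `-1` in the new coordinate `ℓ`.

For the upper bound, replacing `v` by `v ∘ swap x ℓ` whenever `v x < v ℓ` (unless the result is
already present) keeps a family intersecting and strictly lowers `∑ v ℓ`, so an extremal family
may be assumed compressed towards `ℓ`. Its vectors with `v ℓ = 0` restrict to an intersecting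
family in `V n k 1`. The vectors with `v ℓ = -1` are given by `k`-sets `B`, those with `v ℓ = 1`
by pairs `(A, a)` with `#A = k - 1` and `a ∉ A`. Intersecting forbids `a ∈ B` with `A ∩ B = ∅`,
and compression makes the sets `A` pairwise intersecting. Each pair `(A, a)` rules out
`C(n - k, k - 1)` sets `B`, while by Erdős–Ko–Rado in the complement of `B` each `B` is ruled out
by at most `k * C(n - k - 1, k - 2) ≤ C(n - k, k - 1)` pairs (here `n ≥ k ^ 2` is used). Double
counting then shows that there are no more pairs than ruled-out sets, so the two kinds together
number at most `C(n, k)`.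
-/

open Finset

lemma Nat.choose_sub_one_mul_le_choose_succ {m j : ℕ} (h : (j + 1) * (j + 2) ≤ m) :
    (m - 1).choose j * (j + 2) ≤ m.choose (j + 1) := by
  obtain ⟨m, rfl⟩ := Nat.exists_eq_add_one_of_ne_zero (lt_of_lt_of_le (by positivity) h).ne'
  have key := Nat.add_one_mul_choose_eq m j
  rw [Nat.add_sub_cancel]
  refine Nat.le_of_mul_le_mul_right ?_ (Nat.succ_pos j)
  rw [← key]
  nlinarith [Nat.zero_le (m.choose j)]

namespace Finset

variable {α : Type*} [DecidableEq α]

theorem erdos_ko_rado_of_subset {S : Finset α} {𝒜 : Finset (Finset α)} {r : ℕ}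
    (h𝒜S : 𝒜 ⊆ S.powersetCard r) (h𝒜 : (𝒜 : Set (Finset α)).Intersecting) (hr : 2 * r ≤ #S) :
    #𝒜 ≤ (#S - 1).choose (r - 1) := by
  have hsub (A : Finset α) (hA : A ∈ 𝒜) : A ⊆ S := (mem_powersetCard.1 (h𝒜S hA)).1
  let f : Finset α → Finset (Fin #S) := fun A => (A.subtype (· ∈ S)).map S.equivFin.toEmbedding
  have hf_card (A : Finset α) (hA : A ∈ 𝒜) : #(f A) = #A := by
    rw [card_map, card_subtype, filter_true_of_mem (hsub A hA)]
  have hf_inj : Set.InjOn f 𝒜 := by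
    intro A hA B hB h
    have h' := congrArg (map (Function.Embedding.subtype (· ∈ S))) (map_injective _ h)
    rwa [subtype_map, subtype_map, filter_true_of_mem (hsub A hA),
      filter_true_of_mem (hsub B hB)] at h'
  rw [← card_image_of_injOn hf_inj]
  refine erdos_ko_rado ?_ ?_ (Nat.le_div_iff_mul_le two_pos |>.2 (by omega))
  · simp only [coe_image, Set.forall_mem_image, Set.Intersecting]
    intro A hA B hB hAB
    obtain ⟨x, hxA, hxB⟩ := not_disjoint_iff.1 (h𝒜 hA hB)
    have hxS : x ∈ S := hsub A hA hxA
    exact disjoint_left.1 hAB (mem_map_of_mem _ (mem_subtype (a := ⟨x, hxS⟩) |>.2 hxA))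
      (mem_map_of_mem _ (mem_subtype (a := ⟨x, hxS⟩) |>.2 hxB))
  · simp only [coe_image, Set.Sized, Set.forall_mem_image]
    intro A hA
    rw [hf_card A hA, (mem_powersetCard.1 (h𝒜S hA)).2]

lemma choose_le_card_filter_mem_disjoint {S A : Finset α} {a : α} (ha : a ∈ S)
    (hA : A ⊆ S.erase a) :
    (#S - (#A + 1)).choose #A ≤ #{B ∈ S.powersetCard (#A + 1) | a ∈ B ∧ Disjoint A B} := by
  have haA : a ∉ A := fun h => by simpa using hA h
  have hcard : #(S \ insert a A) = #S - (#A + 1) := by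
    rw [card_sdiff_of_subset (insert_subset ha fun x hx => mem_of_mem_erase (hA hx)),
      card_insert_of_notMem haA]
  rw [← hcard, ← card_powersetCard]
  refine card_le_card_of_injOn (insert a) (fun E hE => ?_) fun E hE E' hE' h => ?_
  · rw [mem_coe, mem_powersetCard, subset_sdiff, disjoint_insert_right] at hE
    rw [mem_coe, mem_filter, mem_powersetCard, card_insert_of_notMem hE.1.2.1, hE.2]
    exact ⟨⟨insert_subset ha hE.1.1, rfl⟩, mem_insert_self a E,
      disjoint_insert_right.2 ⟨haA, hE.1.2.2.symm⟩⟩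
  · rw [mem_coe, mem_powersetCard, subset_sdiff, disjoint_insert_right] at hE hE'
    rw [← erase_insert hE.1.2.1, ← erase_insert hE'.1.2.1]
    exact congrArg (erase · a) h

lemma card_filter_mem_disjoint_le {S B : Finset α} {P : Finset (Finset α × α)} {r : ℕ}
    (hB : B ⊆ S) (hP : ∀ p ∈ P, p.1 ∈ S.powersetCard r)
    (hPint : ∀ p ∈ P, ∀ q ∈ P, ¬Disjoint p.1 q.1) (hr : 2 * r ≤ #S - #B) :
    #{p ∈ P | p.2 ∈ B ∧ Disjoint p.1 B} ≤ (#S - #B - 1).choose (r - 1) * #B := by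
  set Q := {p ∈ P | p.2 ∈ B ∧ Disjoint p.1 B}
  have h𝒜 : Q.image Prod.fst ⊆ (S \ B).powersetCard r := by
    simp only [subset_iff, mem_image, mem_filter, Q]
    rintro _ ⟨p, ⟨hp, -, hpB⟩, rfl⟩
    obtain ⟨hpS, hpr⟩ := mem_powersetCard.1 (hP p hp)
    exact mem_powersetCard.2 ⟨subset_sdiff.2 ⟨hpS, hpB⟩, hpr⟩
  have hint : (Q.image Prod.fst : Set (Finset α)).Intersecting := by
    simp only [coe_image, Set.Intersecting, Set.forall_mem_image, mem_coe, mem_filter, Q]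
    exact fun p hp q hq => hPint p hp.1 q hq.1
  calc #Q ≤ #(Q.image Prod.fst ×ˢ B) :=
        card_le_card fun p hp => mem_product.2 ⟨mem_image_of_mem _ hp, (mem_filter.1 hp).2.1⟩
    _ ≤ (#S - #B - 1).choose (r - 1) * #B := by
        rw [card_product, ← card_sdiff_of_subset hB]
        exact Nat.mul_le_mul_right _
          (erdos_ko_rado_of_subset h𝒜 hint (by rwa [card_sdiff_of_subset hB]))

theorem card_add_card_le_choose {S : Finset α} {k : ℕ} (hk : 2 ≤ k) (hS : k ^ 2 ≤ #S)
    {P : Finset (Finset α × α)} {D : Finset (Finset α)}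
    (hP : ∀ p ∈ P, p.2 ∈ S ∧ p.1 ∈ (S.erase p.2).powersetCard (k - 1))
    (hPint : ∀ p ∈ P, ∀ q ∈ P, ¬Disjoint p.1 q.1) (hD : D ⊆ S.powersetCard k)
    (hPD : ∀ p ∈ P, ∀ B ∈ D, p.2 ∈ B → ¬Disjoint p.1 B) :
    #D + #P ≤ (#S).choose k := by
  obtain ⟨j, rfl⟩ : ∃ j, k = j + 2 := ⟨k - 2, by omega⟩
  let r : Finset α × α → Finset α → Prop := fun p B => p.2 ∈ B ∧ Disjoint p.1 B
  set U := {B ∈ S.powersetCard (j + 2) | ∃ p ∈ P, r p B}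
  set c := (#S - (j + 2)).choose (j + 1)
  have hjS : (j + 1) * (j + 2) ≤ #S - (j + 2) := by
    have : (j + 2) ^ 2 = (j + 1) * (j + 2) + (j + 2) := by ring
    omega
  have h2j : 2 * (j + 1) ≤ #S - (j + 2) := le_trans (by nlinarith) hjS
  have hrows : ∀ p ∈ P, c ≤ #(U.bipartiteAbove r p) := by
    intro p hp
    obtain ⟨hpS, hp1⟩ := hP p hp
    rw [mem_powersetCard] at hp1
    have := choose_le_card_filter_mem_disjoint hpS hp1.1
    rw [hp1.2] at this
    refine this.trans (card_le_card fun B hB => ?_)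
    rw [mem_filter] at hB
    exact mem_filter.2 ⟨mem_filter.2 ⟨hB.1, p, hp, hB.2⟩, hB.2⟩
  have hcols : ∀ B ∈ U, #(P.bipartiteBelow r B) ≤ c := by
    intro B hB
    obtain ⟨hBS, hBcard⟩ := mem_powersetCard.1 (mem_filter.1 hB).1
    have hP' (p) (hp : p ∈ P) : p.1 ∈ S.powersetCard (j + 1) :=
      powersetCard_mono (erase_subset _ _) (hP p hp).2
    calc #(P.bipartiteBelow r B) ≤ (#S - #B - 1).choose (j + 1 - 1) * #B :=
          card_filter_mem_disjoint_le hBS hP' hPint (by omega)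
      _ ≤ c := by
          rw [hBcard, Nat.add_sub_cancel]
          exact Nat.choose_sub_one_mul_le_choose_succ hjS
  have hPU : #P ≤ #U :=
    Nat.le_of_mul_le_mul_right (card_mul_le_card_mul r hrows hcols) (Nat.choose_pos (by omega))
  have hDU : Disjoint D U := by
    refine disjoint_left.2 fun B hBD hBU => ?_
    obtain ⟨-, p, hp, hpB⟩ := mem_filter.1 hBU
    exact hPD p hp B hBD hpB.1 hpB.2
  calc #D + #P ≤ #(D ∪ U) := by rw [card_union_of_disjoint hDU]; omega
    _ ≤ #(S.powersetCard (j + 2)) := card_le_card (union_subset hD (filter_subset _ _))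
    _ = (#S).choose (j + 2) := card_powersetCard _ _

end Finset

namespace SignedVec

variable {n N k l : ℕ}

def posSet (v : Fin N → ℤ) : Finset (Fin N) := {i | v i = 1}

def negSet (v : Fin N → ℤ) : Finset (Fin N) := {i | v i = -1}

@[simp] lemma mem_posSet {v : Fin N → ℤ} {i : Fin N} : i ∈ posSet v ↔ v i = 1 := by
  simp [posSet]

@[simp] lemma mem_negSet {v : Fin N → ℤ} {i : Fin N} : i ∈ negSet v ↔ v i = -1 := by
  simp [negSet]

lemma card_posSet {v : Fin N → ℤ} (hv : v ∈ V N k l) : #(posSet v) = k := hv.2.1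

lemma negSet_eq_singleton {v : Fin N → ℤ} (hv : v ∈ V N k 1) {a : Fin N} (ha : v a = -1) :
    negSet v = {a} := by
  have hN : #(negSet v) = 1 := hv.2.2
  obtain ⟨b, hb⟩ := card_eq_one.1 hN
  rwa [hb, singleton_inj, eq_comm, ← mem_singleton, ← hb, mem_negSet]

lemma apply_eq_neg_one_iff {v : Fin N → ℤ} (hv : v ∈ V N k 1) {a : Fin N} (ha : v a = -1)
    {i : Fin N} : v i = -1 ↔ i = a := by
  rw [← mem_negSet, negSet_eq_singleton hv ha, mem_singleton]

lemma exists_apply_eq_neg_one {v : Fin N → ℤ} (hv : v ∈ V N k 1) : ∃ a, v a = -1 := by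
  have hN : #(negSet v) = 1 := hv.2.2
  obtain ⟨a, ha⟩ := card_eq_one.1 hN
  exact ⟨a, mem_negSet.1 (ha ▸ mem_singleton_self a)⟩

lemma eq_of_posSet_eq {v w : Fin N → ℤ} (hv : v ∈ V N k 1) (hw : w ∈ V N k 1)
    (h : posSet v = posSet w) {a : Fin N} (ha : v a = -1) (hb : w a = -1) : v = w := by
  funext i
  have h1 : v i = 1 ↔ w i = 1 := by rw [← mem_posSet, h, mem_posSet]
  have h2 : v i = -1 ↔ w i = -1 := by
    rw [apply_eq_neg_one_iff hv ha, apply_eq_neg_one_iff hw hb]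
  rcases hv.1 i with h | h | h <;> rcases hw.1 i with h' | h' | h' <;> omega

noncomputable def negIdx [NeZero N] (v : Fin N → ℤ) : Fin N := Classical.epsilon (v · = -1)

lemma apply_negIdx [NeZero N] {v : Fin N → ℤ} (hv : v ∈ V N k 1) : v (negIdx v) = -1 :=
  Classical.epsilon_spec (exists_apply_eq_neg_one hv)

lemma V_finite : (V N k l).Finite :=
  (Set.Finite.pi fun _ => Set.toFinite ({0, 1, -1} : Set ℤ)).subset fun v hv i _ => by
    simpa using hv.1 i

lemma dot_comm (v w : Fin N → ℤ) : dot v w = dot w v := by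
  simp only [dot, mul_comm]

lemma dot_eq_card {v w : Fin N → ℤ} (hv : ∀ i, v i = 0 ∨ v i = 1 ∨ v i = -1)
    (hw : ∀ i, w i = 0 ∨ w i = 1 ∨ w i = -1) :
    dot v w = #(posSet v ∩ posSet w) + #(negSet v ∩ negSet w)
      - #(posSet v ∩ negSet w) - #(negSet v ∩ posSet w) := by
  have hterm (i : Fin N) : v i * w i =
      (if i ∈ posSet v ∩ posSet w then 1 else 0) + (if i ∈ negSet v ∩ negSet w then 1 else 0)
      - (if i ∈ posSet v ∩ negSet w then 1 else 0)
      - (if i ∈ negSet v ∩ posSet w then 1 else 0) := by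
    rcases hv i with h | h | h <;> rcases hw i with h' | h' | h' <;> simp [h, h']
  simp only [dot, hterm, sum_add_distrib, sum_sub_distrib, sum_ite_mem, univ_inter, sum_const,
    nsmul_eq_mul, mul_one]

lemma neg_two_le_dot {v w : Fin N → ℤ} (hv : v ∈ V N k 1) (hw : w ∈ V N k 1) :
    -2 ≤ dot v w := by
  have h1 : #(posSet v ∩ negSet w) ≤ 1 := hw.2.2 ▸ card_le_card inter_subset_right
  have h2 : #(negSet v ∩ posSet w) ≤ 1 := hv.2.2 ▸ card_le_card inter_subset_left
  rw [dot_eq_card hv.1 hw.1]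
  omega

lemma dot_eq_neg_two_iff {v w : Fin N → ℤ} (hv : v ∈ V N k 1) (hw : w ∈ V N k 1)
    {a b : Fin N} (ha : v a = -1) (hb : w b = -1) :
    dot v w = -2 ↔ Disjoint (posSet v) (posSet w) ∧ w a = 1 ∧ v b = 1 := by
  have hcard (s : Finset (Fin N)) (x : Fin N) : #(s ∩ {x}) = if x ∈ s then 1 else 0 := by
    rw [inter_singleton]; split_ifs <;> rfl
  rw [dot_eq_card hv.1 hw.1, negSet_eq_singleton hv ha, negSet_eq_singleton hw hb,
    inter_comm {a} (posSet w), hcard, hcard, hcard, disjoint_iff_inter_eq_empty, ← card_eq_zero]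
  simp only [mem_singleton, mem_posSet]
  have : a = b → w a ≠ 1 := by rintro rfl; omega
  split_ifs <;> omega

lemma apply_eq_one_of_dot_eq_neg_two {v w : Fin N → ℤ} (hv : v ∈ V N k 1) (hw : w ∈ V N k 1)
    {b : Fin N} (hb : w b = -1) (h : dot v w = -2) : v b = 1 := by
  obtain ⟨a, ha⟩ := exists_apply_eq_neg_one hv
  exact ((dot_eq_neg_two_iff hv hw ha hb).1 h).2.2

lemma comp_perm_mem_V (e : Equiv.Perm (Fin N)) {v : Fin N → ℤ} (hv : v ∈ V N k l) :
    v ∘ e ∈ V N k l := by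
  have hcard (c : ℤ) : #{i | (v ∘ e) i = c} = #{i | v i = c} := by
    simp only [card_filter, Function.comp_apply]
    exact Equiv.sum_comp e (fun i => if v i = c then 1 else 0)
  exact ⟨fun i => hv.1 (e i), (hcard 1).trans hv.2.1, (hcard (-1)).trans hv.2.2⟩

lemma dot_comp_perm (e : Equiv.Perm (Fin N)) (v w : Fin N → ℤ) :
    dot (v ∘ e) (w ∘ e) = dot v w :=
  Equiv.sum_comp e (fun i => v i * w i)

lemma comp_swap_comp_swap (x y : Fin N) (v : Fin N → ℤ) :
    (v ∘ Equiv.swap x y) ∘ Equiv.swap x y = v := by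
  funext i; simp

lemma dot_comp_swap_left (x y : Fin N) (v w : Fin N → ℤ) :
    dot (v ∘ Equiv.swap x y) w = dot v (w ∘ Equiv.swap x y) := by
  rw [← dot_comp_perm (Equiv.swap x y), comp_swap_comp_swap]

lemma dot_comp_swap (x y : Fin N) (v w : Fin N → ℤ) :
    dot (v ∘ Equiv.swap x y) w = dot v w + (v y - v x) * (w x - w y) := by
  rcases eq_or_ne x y with rfl | hxy
  · simp
  have h : ∑ i, (v (Equiv.swap x y i) - v i) * w i = (v y - v x) * (w x - w y) := by
    rw [Fintype.sum_eq_add x y hxy fun i hi => by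
      rw [Equiv.swap_apply_of_ne_of_ne hi.1 hi.2, sub_self, zero_mul]]
    simp only [Equiv.swap_apply_left, Equiv.swap_apply_right]
    ring
  simp only [dot, Function.comp_apply, ← h, ← sum_add_distrib]
  exact sum_congr rfl fun i _ => by ring

lemma card_filter_snoc (v : Fin n → ℤ) (c d : ℤ) :
    #{i | (Fin.snoc v c : Fin (n + 1) → ℤ) i = d} = #{i | v i = d} + if c = d then 1 else 0 := by
  simp only [card_filter, Fin.sum_univ_castSucc, Fin.snoc_castSucc, Fin.snoc_last]

lemma snoc_zero_mem_V_iff {v : Fin n → ℤ} : Fin.snoc v 0 ∈ V (n + 1) k l ↔ v ∈ V n k l := by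
  simp [V, Fin.forall_fin_succ', card_filter_snoc]

lemma snoc_neg_one_mem_V_iff {v : Fin n → ℤ} :
    Fin.snoc v (-1) ∈ V (n + 1) k (l + 1) ↔ v ∈ V n k l := by
  simp [V, Fin.forall_fin_succ', card_filter_snoc]

lemma dot_snoc (v w : Fin n → ℤ) (c d : ℤ) :
    dot (Fin.snoc v c : Fin (n + 1) → ℤ) (Fin.snoc w d) = dot v w + c * d := by
  simp only [dot, Fin.sum_univ_castSucc, Fin.snoc_castSucc, Fin.snoc_last]

lemma indicator_mem_V {B : Finset (Fin n)} : (B : Set (Fin n)).indicator 1 ∈ V n #B 0 := by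
  refine ⟨fun i => ?_, by simp [Set.indicator_apply], ?_⟩
  · by_cases hi : i ∈ B <;> simp [hi]
  · simp [Set.indicator_apply, ite_eq_iff]

theorem add_choose_mem_interSizes {s : ℕ} (hs : s ∈ interSizes n k) :
    s + n.choose k ∈ interSizes (n + 1) k := by
  obtain ⟨F, hFV, hF, rfl⟩ := hs
  set lift : (Fin n → ℤ) → Fin (n + 1) → ℤ := fun v => Fin.snoc v 0
  set top : Finset (Fin n) → Fin (n + 1) → ℤ :=
    fun B => Fin.snoc ((B : Set (Fin n)).indicator 1) (-1)
  set T : Set (Fin (n + 1) → ℤ) := top '' ↑(powersetCard k (univ : Finset (Fin n)))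
  have hliftV : lift '' F ⊆ V (n + 1) k 1 := by
    rintro _ ⟨v, hv, rfl⟩
    exact snoc_zero_mem_V_iff.2 (hFV hv)
  have hTV : T ⊆ V (n + 1) k 1 := by
    rintro _ ⟨B, hB, rfl⟩
    rw [mem_coe, mem_powersetCard_univ] at hB
    exact snoc_neg_one_mem_V_iff.2 (hB ▸ indicator_mem_V)
  have hT_last : ∀ y ∈ T, y (Fin.last n) = -1 := by
    rintro _ ⟨B, -, rfl⟩
    exact Fin.snoc_last _ _
  have hlast_ne : ∀ x ∈ lift '' F ∪ T, x (Fin.last n) ≠ 1 := by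
    rintro _ (⟨v, -, rfl⟩ | hx)
    · simp [lift]
    · simp [hT_last _ hx]
  have hGV : lift '' F ∪ T ⊆ V (n + 1) k 1 := Set.union_subset hliftV hTV
  refine ⟨lift '' F ∪ T, hGV, fun x hx y hy => ?_, ?_⟩
  · rcases hy with ⟨w, hw, rfl⟩ | hy
    · rcases hx with ⟨v, hv, rfl⟩ | hx
      · simpa [lift, dot_snoc] using hF v hv w hw
      · rw [dot_comm]
        exact fun h => hlast_ne _ (Or.inl ⟨w, hw, rfl⟩)
          (apply_eq_one_of_dot_eq_neg_two (hliftV ⟨w, hw, rfl⟩) (hTV hx) (hT_last x hx) h)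
    · exact fun h => hlast_ne x hx
        (apply_eq_one_of_dot_eq_neg_two (hGV hx) (hTV hy) (hT_last y hy) h)
  · have hdisj : Disjoint (lift '' F) T := by
      rw [Set.disjoint_left]
      rintro _ ⟨v, -, rfl⟩ hxT
      simpa [lift] using hT_last _ hxT
    have hlift_inj : Function.Injective lift := fun v w h => (Fin.snoc_injective2 h).1
    have htop_inj : Function.Injective top := fun B B' h =>
      coe_injective (Set.indicator_one_inj ℤ (Fin.snoc_injective2 h).1)
    rw [Set.ncard_union_eq hdisj ((V_finite.subset hFV).image _) ((finite_toSet _).image _),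
      Set.ncard_image_of_injective _ hlift_inj, Set.ncard_image_of_injective _ htop_inj,
      Set.ncard_coe_finset, card_powersetCard, card_univ, Fintype.card_fin]

def IsIntersecting (F : Set (Fin N → ℤ)) : Prop := ∀ v ∈ F, ∀ w ∈ F, dot v w ≠ -2

def IsCompressed (ℓ : Fin N) (F : Finset (Fin N → ℤ)) : Prop :=
  ∀ v ∈ F, ∀ x, v x < v ℓ → v ∘ Equiv.swap x ℓ ∈ F

def weight (ℓ : Fin N) (F : Finset (Fin N → ℤ)) : ℕ := ∑ v ∈ F, (v ℓ + 1).toNat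

section Compression

variable (x ℓ : Fin N) (F : Finset (Fin N → ℤ))

def compressFn (v : Fin N → ℤ) : Fin N → ℤ :=
  if v x < v ℓ ∧ v ∘ Equiv.swap x ℓ ∉ F then v ∘ Equiv.swap x ℓ else v

def compress : Finset (Fin N → ℤ) := F.image (compressFn x ℓ F)

lemma compressFn_injOn : Set.InjOn (compressFn x ℓ F) F := by
  intro u hu v hv h
  simp only [compressFn] at h
  split_ifs at h with hu' hv' hv'
  · simpa [comp_swap_comp_swap] using congrArg (· ∘ Equiv.swap x ℓ) h
  · exact absurd (h ▸ hv) hu'.2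
  · exact absurd (h ▸ hu) hv'.2
  · exact h

lemma card_compress : #(compress x ℓ F) = #F :=
  card_image_of_injOn (compressFn_injOn x ℓ F)

variable {x ℓ F}

lemma compress_subset_V (hFV : ↑F ⊆ V N k l) : ↑(compress x ℓ F) ⊆ V N k l := by
  simp only [compress, coe_image, Set.image_subset_iff]
  intro v hv
  rw [Set.mem_preimage, compressFn]
  split_ifs
  exacts [comp_perm_mem_V _ (hFV hv), hFV hv]

lemma dot_comp_swap_ne_neg_two (hFV : ↑F ⊆ V N k 1) (hF : IsIntersecting (F : Set (Fin N → ℤ)))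
    {u v : Fin N → ℤ} (hu : u ∈ F) (hv : v ∈ F) (hux : u x < u ℓ)
    (hv_stays : ¬(v x < v ℓ ∧ v ∘ Equiv.swap x ℓ ∉ F)) :
    dot (u ∘ Equiv.swap x ℓ) v ≠ -2 := by
  by_cases hvx : v x < v ℓ
  · rw [dot_comp_swap_left]
    exact hF u hu _ (not_not.1 (not_and.1 hv_stays hvx))
  · have hge := neg_two_le_dot (hFV hu) (hFV hv)
    have hprod : 0 ≤ (u ℓ - u x) * (v x - v ℓ) := mul_nonneg (by linarith) (by linarith)
    rw [dot_comp_swap]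
    intro h
    exact hF u hu v hv (by linarith)

lemma compress_isIntersecting (hFV : ↑F ⊆ V N k 1) (hF : IsIntersecting (F : Set (Fin N → ℤ))) :
    IsIntersecting (compress x ℓ F : Set (Fin N → ℤ)) := by
  simp only [IsIntersecting, compress, coe_image, Set.forall_mem_image]
  intro u hu v hv
  unfold compressFn
  split_ifs with hu' hv' hv'
  · rw [dot_comp_perm]
    exact hF u hu v hv
  · exact dot_comp_swap_ne_neg_two hFV hF hu hv hu'.1 hv'
  · rw [dot_comm]
    exact dot_comp_swap_ne_neg_two hFV hF hv hu hv'.1 hu'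
  · exact hF u hu v hv

lemma weight_compress_lt (hFV : ↑F ⊆ V N k l) {v : Fin N → ℤ} (hv : v ∈ F)
    (hvx : v x < v ℓ) (hv_moves : v ∘ Equiv.swap x ℓ ∉ F) :
    weight ℓ (compress x ℓ F) < weight ℓ F := by
  have hlt {u : Fin N → ℤ} (hu : u ∈ F) (hux : u x < u ℓ) :
      ((u ∘ Equiv.swap x ℓ) ℓ + 1).toNat < (u ℓ + 1).toNat := by
    have := (hFV hu).1 x
    simp only [Function.comp_apply, Equiv.swap_apply_right]
    omega
  rw [weight, compress, sum_image (compressFn_injOn x ℓ F)]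
  refine sum_lt_sum (fun u hu => ?_) ⟨v, hv, ?_⟩
  · unfold compressFn
    split_ifs with h
    exacts [(hlt hu h.1).le, le_rfl]
  · rw [compressFn, if_pos ⟨hvx, hv_moves⟩]
    exact hlt hv hvx

end Compression

theorem exists_isCompressed (ℓ : Fin N) {F : Finset (Fin N → ℤ)} (hFV : ↑F ⊆ V N k 1)
    (hF : IsIntersecting (F : Set (Fin N → ℤ))) :
    ∃ G : Finset (Fin N → ℤ), ↑G ⊆ V N k 1 ∧ IsIntersecting (G : Set (Fin N → ℤ)) ∧
      #G = #F ∧ IsCompressed ℓ G := by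
  obtain ⟨G, ⟨hGV, hG, hcard⟩, hmin⟩ := (measure (weight ℓ)).wf.has_min
    {G | ↑G ⊆ V N k 1 ∧ IsIntersecting (G : Set (Fin N → ℤ)) ∧ #G = #F} ⟨F, hFV, hF, rfl⟩
  refine ⟨G, hGV, hG, hcard, fun v hv x hvx => ?_⟩
  by_contra hv_moves
  exact hmin (compress x ℓ G)
    ⟨compress_subset_V hGV, compress_isIntersecting hGV hG, (card_compress x ℓ G).trans hcard⟩
    (weight_compress_lt hGV hv hvx hv_moves)

section Compressed

variable {ℓ : Fin N} {F : Finset (Fin N → ℤ)}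

lemma exists_mem_shifted_of_isCompressed (hFV : ↑F ⊆ V N k 1) (hcomp : IsCompressed ℓ F)
    {w : Fin N → ℤ} (hw : w ∈ F) (hwℓ : w ℓ = 1) {y : Fin N} (hyℓ : y ≠ ℓ) (hwy : w y ≠ 1) :
    ∃ u ∈ F, u ℓ = -1 ∧ u y = 1 ∧ ∀ i, i ≠ y → i ≠ ℓ → (u i = 1 ↔ w i = 1) := by
  -- one swap `(y ℓ)` if `w y = -1`; if `w y = 0`, a second swap moves the `-1` of `w` to `ℓ`
  obtain ⟨b, hb⟩ := exists_apply_eq_neg_one (hFV hw)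
  have hbℓ : b ≠ ℓ := by rintro rfl; omega
  have hw₁ : w ∘ Equiv.swap y ℓ ∈ F :=
    hcomp w hw y (by rcases (hFV hw).1 y with h | h | h <;> omega)
  rcases (hFV hw).1 y with hy | hy | hy
  · have hby : b ≠ y := by rintro rfl; omega
    refine ⟨_, hcomp _ hw₁ b ?_, ?_, ?_, fun i hiy hiℓ => ?_⟩ <;>
      simp only [Function.comp_apply, Equiv.swap_apply_def] <;> split_ifs <;> subst_vars <;> omega
  · exact absurd hy hwy
  · refine ⟨_, hw₁, ?_, ?_, fun i hiy hiℓ => ?_⟩ <;>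
      simp only [Function.comp_apply, Equiv.swap_apply_def] <;> split_ifs <;> subst_vars <;> omega

lemma not_disjoint_erase_posSet (hN : 2 * k < N) (hFV : ↑F ⊆ V N k 1)
    (hF : IsIntersecting (F : Set (Fin N → ℤ))) (hcomp : IsCompressed ℓ F) {v w : Fin N → ℤ}
    (hv : v ∈ F) (hw : w ∈ F) (hvℓ : v ℓ = 1) (hwℓ : w ℓ = 1) :
    ¬Disjoint ((posSet v).erase ℓ) ((posSet w).erase ℓ) := by
  intro hdisj
  obtain ⟨a, ha⟩ := exists_apply_eq_neg_one (hFV hv)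
  have haℓ : a ≠ ℓ := by rintro rfl; omega
  -- `y` is chosen so that the vector `u` obtained by shifting `w` at `y` has `dot v u = -2`
  obtain ⟨y, hyℓ, hvy, hwy, hya⟩ : ∃ y, y ≠ ℓ ∧ v y ≠ 1 ∧ w y ≠ 1 ∧ (y = a ∨ w a = 1) := by
    by_cases hwa : w a = 1
    · obtain ⟨z, hz⟩ : ∃ z, z ∉ posSet v ∪ posSet w := by
        by_contra! h
        have := card_union_le (posSet v) (posSet w)
        rw [eq_univ_of_forall h, card_univ, Fintype.card_fin, card_posSet (hFV hv),
          card_posSet (hFV hw)] at this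
        omega
      simp only [mem_union, mem_posSet, not_or] at hz
      exact ⟨z, by rintro rfl; exact hz.1 hvℓ, hz.1, hz.2, Or.inr hwa⟩
    · exact ⟨a, haℓ, by omega, hwa, Or.inl rfl⟩
  obtain ⟨u, hu, huℓ, huy, hu_eq⟩ :=
    exists_mem_shifted_of_isCompressed hFV hcomp hw hwℓ hyℓ hwy
  refine hF v hv u hu ((dot_eq_neg_two_iff (hFV hv) (hFV hu) ha huℓ).2 ⟨?_, ?_, hvℓ⟩)
  · refine disjoint_left.2 fun i hiv hiu => ?_
    rw [mem_posSet] at hiv hiu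
    have hiℓ : i ≠ ℓ := by rintro rfl; omega
    have hiy : i ≠ y := by rintro rfl; exact hvy hiv
    exact disjoint_left.1 hdisj (mem_erase.2 ⟨hiℓ, mem_posSet.2 hiv⟩)
      (mem_erase.2 ⟨hiℓ, mem_posSet.2 ((hu_eq i hiy hiℓ).1 hiu)⟩)
  · rcases eq_or_ne a y with rfl | hay
    · exact huy
    · exact (hu_eq a hay haℓ).2 (hya.resolve_left hay.symm)

end Compressed

section Encoding

variable {ℓ : Fin N}

lemma injOn_posSet : Set.InjOn posSet {v | v ∈ V N k 1 ∧ v ℓ = -1} :=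
  fun _ hu _ hv h => eq_of_posSet_eq hu.1 hv.1 h hu.2 hv.2

lemma posSet_mem_powersetCard_erase {v : Fin N → ℤ} (hv : v ∈ V N k l) (hvℓ : v ℓ ≠ 1) :
    posSet v ∈ (univ.erase ℓ).powersetCard k :=
  mem_powersetCard.2
    ⟨fun x hx => mem_erase.2 ⟨by rintro rfl; exact hvℓ (mem_posSet.1 hx), mem_univ x⟩,
      card_posSet hv⟩

variable [NeZero N]

lemma injOn_erase_posSet_negIdx :
    Set.InjOn (fun v => ((posSet v).erase ℓ, negIdx v)) {v | v ∈ V N k 1 ∧ v ℓ = 1} := by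
  intro u hu v hv h
  obtain ⟨hpos, hneg⟩ := Prod.mk.inj h
  refine eq_of_posSet_eq hu.1 hv.1 ?_ (apply_negIdx hu.1) (hneg ▸ apply_negIdx hv.1)
  rw [← insert_erase (mem_posSet.2 hu.2), ← insert_erase (mem_posSet.2 hv.2), hpos]

lemma negIdx_ne {v : Fin N → ℤ} (hv : v ∈ V N k 1) (hvℓ : v ℓ = 1) : negIdx v ≠ ℓ := fun h => by
  have := apply_negIdx hv
  rw [h] at this
  omega

lemma erase_posSet_mem_powersetCard {v : Fin N → ℤ} (hv : v ∈ V N k 1) (hvℓ : v ℓ = 1) :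
    (posSet v).erase ℓ ∈ ((univ.erase ℓ).erase (negIdx v)).powersetCard (k - 1) := by
  have hneg := apply_negIdx hv
  refine mem_powersetCard.2 ⟨fun x hx => ?_, ?_⟩
  · rw [mem_erase, mem_posSet] at hx
    exact mem_erase.2 ⟨by rintro rfl; omega, mem_erase.2 ⟨hx.1, mem_univ x⟩⟩
  · rw [card_erase_of_mem (mem_posSet.2 hvℓ), card_posSet hv]

end Encoding

section LastCoordinate

variable {F : Finset (Fin (n + 1) → ℤ)}

lemma card_filter_last_eq_zero_mem_interSizes (hFV : ↑F ⊆ V (n + 1) k 1)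
    (hF : IsIntersecting (F : Set (Fin (n + 1) → ℤ))) :
    #{v ∈ F | v (Fin.last n) = 0} ∈ interSizes n k := by
  set F₀ := {v ∈ F | v (Fin.last n) = 0}
  have hsnoc {v} (hv : v ∈ F₀) : Fin.snoc (Fin.init v) 0 = v := by
    rw [← (mem_filter.1 hv).2, Fin.snoc_init_self]
  refine ⟨↑(F₀.image Fin.init), ?_, ?_, ?_⟩
  · simp only [coe_image, Set.image_subset_iff]
    intro v hv
    exact snoc_zero_mem_V_iff.1 ((hsnoc hv).symm ▸ hFV (mem_filter.1 hv).1)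
  · simp only [coe_image, Set.forall_mem_image]
    intro v hv w hw
    have := hF v (mem_filter.1 hv).1 w (mem_filter.1 hw).1
    rwa [← hsnoc hv, ← hsnoc hw, dot_snoc, mul_zero, add_zero] at this
  · rw [Set.ncard_coe_finset, card_image_of_injOn fun v hv w hw h => by
      rw [← hsnoc hv, ← hsnoc hw, show Fin.init v = Fin.init w from h]]

lemma card_filter_last_add_card_filter_last_le_choose (hk : 2 ≤ k) (hn : k ^ 2 ≤ n)
    (hFV : ↑F ⊆ V (n + 1) k 1) (hF : IsIntersecting (F : Set (Fin (n + 1) → ℤ)))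
    (hcomp : IsCompressed (Fin.last n) F) :
    #{v ∈ F | v (Fin.last n) = -1} + #{v ∈ F | v (Fin.last n) = 1} ≤ n.choose k := by
  set ℓ := Fin.last n
  have hFm : ∀ v ∈ {v ∈ F | v ℓ = -1}, v ∈ V (n + 1) k 1 ∧ v ℓ = -1 :=
    fun v hv => ⟨hFV (mem_filter.1 hv).1, (mem_filter.1 hv).2⟩
  have hF₁ : ∀ v ∈ {v ∈ F | v ℓ = 1}, v ∈ V (n + 1) k 1 ∧ v ℓ = 1 :=
    fun v hv => ⟨hFV (mem_filter.1 hv).1, (mem_filter.1 hv).2⟩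
  have hS : #(univ.erase ℓ) = n := by simp
  rw [← card_image_of_injOn (injOn_posSet.mono hFm),
    ← card_image_of_injOn (injOn_erase_posSet_negIdx.mono hF₁)]
  refine (card_add_card_le_choose hk (hS.symm ▸ hn) ?_ ?_ ?_ ?_).trans_eq (by rw [hS])
  · simp only [mem_image, forall_exists_index, and_imp, forall_apply_eq_imp_iff₂]
    exact fun v hv => ⟨mem_erase.2 ⟨negIdx_ne (hF₁ v hv).1 (hF₁ v hv).2, mem_univ _⟩,
      erase_posSet_mem_powersetCard (hF₁ v hv).1 (hF₁ v hv).2⟩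
  · simp only [mem_image, forall_exists_index, and_imp, forall_apply_eq_imp_iff₂]
    exact fun v hv w hw => not_disjoint_erase_posSet (by nlinarith) hFV hF hcomp
      (mem_filter.1 hv).1 (mem_filter.1 hw).1 (hF₁ v hv).2 (hF₁ w hw).2
  · simp only [subset_iff, mem_image, forall_exists_index, and_imp, forall_apply_eq_imp_iff₂]
    exact fun u hu => posSet_mem_powersetCard_erase (hFm u hu).1 (by simp [(hFm u hu).2])
  · simp only [mem_image, forall_exists_index, and_imp, forall_apply_eq_imp_iff₂]
    intro v hv u hu hvu hdisj
    have hℓu : ℓ ∉ posSet u := by simp [(hFm u hu).2]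
    refine hF v (mem_filter.1 hv).1 u (mem_filter.1 hu).1 ((dot_eq_neg_two_iff (hF₁ v hv).1
      (hFm u hu).1 (apply_negIdx (hF₁ v hv).1) (hFm u hu).2).2 ⟨?_, mem_posSet.1 hvu, (hF₁ v hv).2⟩)
    rw [← insert_erase (mem_posSet.2 (hF₁ v hv).2)]
    exact disjoint_insert_left.2 ⟨hℓu, hdisj⟩

end LastCoordinate

lemma card_eq_card_filter_add (F : Finset (Fin (n + 1) → ℤ)) (hFV : ↑F ⊆ V (n + 1) k 1) :
    #F = #{v ∈ F | v (Fin.last n) = 0} + (#{v ∈ F | v (Fin.last n) = -1}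
      + #{v ∈ F | v (Fin.last n) = 1}) := by
  rw [card_eq_sum_card_fiberwise (f := fun v => v (Fin.last n)) (t := {0, -1, 1})
    fun v hv => by rcases (hFV hv).1 (Fin.last n) with h | h | h <;> simp [h],
    sum_insert (by decide), sum_pair (by decide)]

theorem exists_mem_interSizes_le_add_choose (hk : 2 ≤ k) (hn : k ^ 2 ≤ n) {s : ℕ}
    (hs : s ∈ interSizes (n + 1) k) : ∃ t ∈ interSizes n k, s ≤ t + n.choose k := by
  obtain ⟨F, hFV, hF, rfl⟩ := hs
  have hfin := V_finite.subset hFV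
  obtain ⟨G, hGV, hG, hcard, hcomp⟩ :=
    exists_isCompressed (Fin.last n) (F := hfin.toFinset) (by rwa [hfin.coe_toFinset])
      (by rwa [hfin.coe_toFinset])
  refine ⟨_, card_filter_last_eq_zero_mem_interSizes hGV hG, ?_⟩
  rw [Set.ncard_eq_toFinset_card F hfin, ← hcard, card_eq_card_filter_add G hGV]
  exact Nat.add_le_add_left (card_filter_last_add_card_filter_last_le_choose hk hn hGV hG hcomp) _

end SignedVec

theorem stmt_18 (n k : ℕ) (hk : 2 ≤ k) (hn : k ^ 2 ≤ n)
    (m₁ m₂ : ℕ)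
    (hm₁ : IsGreatest (interSizes n k) m₁)
    (hm₂ : IsGreatest (interSizes (n + 1) k) m₂) :
    m₂ = m₁ + n.choose k := by
  obtain ⟨t, ht, hle⟩ := SignedVec.exists_mem_interSizes_le_add_choose hk hn hm₂.1
  exact le_antisymm (hle.trans (Nat.add_le_add_right (hm₁.2 ht) _))
    (hm₂.2 (SignedVec.add_choose_mem_interSizes hm₁.1))
end

section
/- Let k = 3, n = 8 and let F ⊂ V(n+1,k,1) be a shifted intersecting family. Then any two sets of +1 coordinates (restricted to positions 2..n) of vectors of F having -1 in position 1 and +1 in position n+1 share at least 2 common elements; consequently there is at most one such vector. -/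
/-- the `(i,j)`-shift of one vector: swap coordinates `i` and `j` if `v i < v j`. -/
def shiftVec {n : ℕ} (i j : Fin n) (v : Fin n → ℤ) : Fin n → ℤ :=
  if v i < v j then v ∘ (Equiv.swap i j) else v


/-
Let `A`, `B` be the `+1`-sets of `v`, `w` without the last coordinate `l`, and suppose
`A ∩ B ⊆ {a}` for some `a ∈ A`. Choose `c ∈ B \ A` and a coordinate `e` in neither support
(there is room because `2k ≤ n`). The shifts `(e, l)` then `(0, c)` applied to `v`, and
`(0, a)` applied to `w`, produce two members of the family whose scalar product is `-2`. For `k = 3` the sets `A`, `B` have two elements, so `|A ∩ B| ≥ 2`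
forces `A = B` and hence `v = w`.
-/

open Finset Equiv

theorem Finset.exists_mem_subset_singleton_of_card_le_one {α : Type*} {s t : Finset α}
    (hs : s.Nonempty) (ht : t ⊆ s) (h : #t ≤ 1) : ∃ a ∈ s, t ⊆ {a} := by
  rcases t.eq_empty_or_nonempty with rfl | ⟨x, hx⟩
  · obtain ⟨a, ha⟩ := hs
    exact ⟨a, ha, empty_subset _⟩
  · exact ⟨x, ht hx, fun y hy => mem_singleton.mpr (card_le_one.mp h y hy x hx)⟩

section Families

variable {n : ℕ}

def IsIntersecting (F : Set (Fin n → ℤ)) : Prop := ∀ v ∈ F, ∀ w ∈ F, dot v w ≠ -2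

def IsShifted (F : Set (Fin n → ℤ)) : Prop := ∀ i j : Fin n, i < j → ∀ v ∈ F, shiftVec i j v ∈ F

theorem IsShifted.comp_swap_mem {F : Set (Fin n → ℤ)} (hF : IsShifted F) {i j : Fin n}
    (hij : i < j) {v : Fin n → ℤ} (hv : v ∈ F) (hlt : v i < v j) : v ∘ swap i j ∈ F := by
  simpa only [shiftVec, if_pos hlt] using hF i j hij v hv

end Families

namespace V

variable {n k l : ℕ} {v w : Fin n → ℤ}

theorem eq_of_apply_eq_neg_one (hv : v ∈ V n k 1) {i j : Fin n} (hi : v i = -1)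
    (hj : v j = -1) : i = j :=
  Finset.card_le_one.mp hv.2.2.le i (by simpa using hi) j (by simpa using hj)

theorem apply_eq_zero_or_eq_one (hv : v ∈ V n k 1) {p i : Fin n} (hp : v p = -1)
    (hip : i ≠ p) : v i = 0 ∨ v i = 1 :=
  (hv.1 i).imp_right (Or.resolve_right · fun h => hip (eq_of_apply_eq_neg_one hv h hp))

theorem eq_of_forall_eq_imp (hv : v ∈ V n k l) (hw : w ∈ V n k l)
    (hpos : ∀ i, v i = 1 → w i = 1) (hneg : ∀ i, v i = -1 → w i = -1) : v = w := by
  have hsub {s : ℤ} (h : ∀ i, v i = s → w i = s) (hcard : #{i | v i = s} = #{i | w i = s})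
      (i : Fin n) (hi : w i = s) : v i = s := by
    have heq := eq_of_subset_of_card_le (s := {i | v i = s}) (t := {i | w i = s})
      (fun i hi => by simpa using h i (by simpa using hi)) hcard.ge
    have hmem : i ∈ ({i | v i = s} : Finset (Fin n)) := heq ▸ mem_filter.mpr ⟨mem_univ i, hi⟩
    exact (mem_filter.mp hmem).2
  have hpos' := hsub hpos (hv.2.1.trans hw.2.1.symm)
  have hneg' := hsub hneg (hv.2.2.trans hw.2.2.symm)
  funext i
  rcases hw.1 i with h | h | h
  · rcases hv.1 i with h' | h' | h'
    · rw [h, h']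
    · simpa [h] using hpos i h'
    · simpa [h] using hneg i h'
  · exact (hpos' i h).trans h.symm
  · exact (hneg' i h).trans h.symm

end V

theorem dot_eq_neg_two {n : ℕ} {v w : Fin n → ℤ} {a c : Fin n} (hac : a ≠ c)
    (ha : v a * w a = -1) (hc : v c * w c = -1)
    (hzero : ∀ i, i ≠ a → i ≠ c → v i * w i = 0) : dot v w = -2 := by
  rw [dot, sum_eq_add_of_mem a c (mem_univ a) (mem_univ c) hac
    fun i _ hi => hzero i hi.1 hi.2, ha, hc]
  norm_num

/-- Moving the `+1` of `v` from `q` to `e` and its `-1` from `p` to `c`, and the `-1` of `w`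
from `p` to `a`, makes the two vectors meet with opposite signs exactly at `a` and `c`. -/
theorem dot_comp_swap_eq_neg_two {n : ℕ} {v w : Fin n → ℤ} {p q a c e : Fin n}
    (hvp : v p = -1) (hvq : v q = 1) (hva : v a = 1) (hvc : v c = 0) (hve : v e = 0)
    (hwp : w p = -1) (hwc : w c = 1) (hwe : w e = 0) (haq : a ≠ q)
    (hvw : ∀ i, i ≠ p → i ≠ a → i ≠ q → v i * w i = 0) :
    dot ((v ∘ swap e q) ∘ swap p c) (w ∘ swap p a) = -2 := by
  have hne {f : Fin n → ℤ} {i j : Fin n} (h : f i ≠ f j) : i ≠ j := ne_of_apply_ne f h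
  have hap : a ≠ p := hne (f := v) (by rw [hva, hvp]; decide)
  have hcp : c ≠ p := hne (f := v) (by rw [hvc, hvp]; decide)
  have hep : e ≠ p := hne (f := v) (by rw [hve, hvp]; decide)
  have hqp : q ≠ p := hne (f := v) (by rw [hvq, hvp]; decide)
  have hac : a ≠ c := hne (f := v) (by rw [hva, hvc]; decide)
  have hae : a ≠ e := hne (f := v) (by rw [hva, hve]; decide)
  have hcq : c ≠ q := hne (f := v) (by rw [hvc, hvq]; decide)
  have hce : c ≠ e := hne (f := w) (by rw [hwc, hwe]; decide)
  refine dot_eq_neg_two hac ?_ ?_ fun i hia hic => ?_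
  all_goals simp only [Function.comp_apply]
  · rw [swap_apply_of_ne_of_ne hap hac, swap_apply_of_ne_of_ne hae haq, swap_apply_right, hva, hwp]
    norm_num
  · rw [swap_apply_right, swap_apply_of_ne_of_ne hep.symm hqp.symm,
      swap_apply_of_ne_of_ne hcp hac.symm, hvp, hwc]
    norm_num
  by_cases hip : i = p
  · rw [hip, swap_apply_left, swap_apply_of_ne_of_ne hce hcq, hvc, zero_mul]
  by_cases hie : i = e
  · rw [hie, swap_apply_of_ne_of_ne hep hae.symm, hwe, mul_zero]
  by_cases hiq : i = q
  · rw [hiq, swap_apply_of_ne_of_ne hqp hcq.symm, swap_apply_right, hve, zero_mul]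
  rw [swap_apply_of_ne_of_ne hip hic, swap_apply_of_ne_of_ne hie hiq,
    swap_apply_of_ne_of_ne hip hia]
  exact hvw i hip hia hiq

theorem IsIntersecting.exists_mul_ne_zero {n k : ℕ} {F : Set (Fin n → ℤ)}
    (hint : IsIntersecting F) (hsh : IsShifted F) (hF : F ⊆ V n k 1) {v w : Fin n → ℤ}
    (hv : v ∈ F) (hw : w ∈ F) {p q a c e : Fin n} (hpa : p < a) (hpc : p < c) (heq_lt : e < q)
    (hvp : v p = -1) (hvq : v q = 1) (hva : v a = 1) (hvc : v c = 0) (hve : v e = 0)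
    (hwp : w p = -1) (hwc : w c = 1) (hwe : w e = 0) (haq : a ≠ q) :
    ∃ i, i ≠ p ∧ i ≠ a ∧ i ≠ q ∧ v i * w i ≠ 0 := by
  by_contra! hvw
  have hv₁ : v ∘ swap e q ∈ F := hsh.comp_swap_mem heq_lt hv (by rw [hve, hvq]; norm_num)
  have hv₂ : (v ∘ swap e q) ∘ swap p c ∈ F := by
    refine hsh.comp_swap_mem hpc hv₁ ?_
    have hpe : p ≠ e := ne_of_apply_ne v (by rw [hvp, hve]; decide)
    have hpq : p ≠ q := ne_of_apply_ne v (by rw [hvp, hvq]; decide)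
    have hce : c ≠ e := ne_of_apply_ne w (by rw [hwc, hwe]; decide)
    have hcq : c ≠ q := ne_of_apply_ne v (by rw [hvc, hvq]; decide)
    simp only [Function.comp_apply]
    rw [swap_apply_of_ne_of_ne hpe hpq, swap_apply_of_ne_of_ne hce hcq, hvp, hvc]
    norm_num
  have hw₁ : w ∘ swap p a ∈ F := by
    refine hsh.comp_swap_mem hpa hw ?_
    rcases V.apply_eq_zero_or_eq_one (hF hw) hwp hpa.ne' with h | h <;> rw [hwp, h] <;> norm_num
  exact hint _ hv₂ _ hw₁
    (dot_comp_swap_eq_neg_two hvp hvq hva hvc hve hwp hwc hwe haq hvw)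

theorem IsIntersecting.two_le_card_common_ones {n k : ℕ} {F : Set (Fin (n + 1) → ℤ)}
    (hint : IsIntersecting F) (hsh : IsShifted F) (hF : F ⊆ V (n + 1) k 1) (hk : 3 ≤ k)
    (hn : 2 * k ≤ n) {v w : Fin (n + 1) → ℤ} (hv : v ∈ F) (hw : w ∈ F) (hv0 : v 0 = -1)
    (hvl : v (Fin.last n) = 1) (hw0 : w 0 = -1) (hwl : w (Fin.last n) = 1) :
    2 ≤ #{i | v i = 1 ∧ w i = 1 ∧ i ≠ Fin.last n} := by
  by_contra! hC
  set l := Fin.last n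
  set A : Finset (Fin (n + 1)) := {i | v i = 1}
  set B : Finset (Fin (n + 1)) := {i | w i = 1}
  have hlA : l ∈ A := mem_filter.mpr ⟨mem_univ l, hvl⟩
  have hlB : l ∈ B := mem_filter.mpr ⟨mem_univ l, hwl⟩
  have hA : #(A.erase l) = k - 1 := by rw [card_erase_of_mem hlA, (hF hv).2.1]
  have hB : #(B.erase l) = k - 1 := by rw [card_erase_of_mem hlB, (hF hw).2.1]
  have hAB : A.erase l ∩ B.erase l = ({i | v i = 1 ∧ w i = 1 ∧ i ≠ l} : Finset _) := by
    ext i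
    simp only [A, B, mem_inter, mem_erase, mem_filter, mem_univ, true_and]
    tauto
  rw [← hAB] at hC
  obtain ⟨a, haA, hCa⟩ := exists_mem_subset_singleton_of_card_le_one
    (card_pos.mp (by omega : 0 < #(A.erase l))) (inter_subset_left (s₂ := B.erase l)) (by omega)
  obtain ⟨c, hcB, hcA⟩ :=
    exists_mem_notMem_of_card_lt_card (s := A.erase l ∩ B.erase l) (t := B.erase l) (by omega)
  obtain ⟨e, -, he⟩ := exists_mem_notMem_of_card_lt_card (s := insert 0 (A ∪ B)) (t := univ) <| by
    have h1 : 1 ≤ #(A ∩ B) := card_pos.mpr ⟨l, mem_inter.mpr ⟨hlA, hlB⟩⟩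
    have h2 := card_union_add_card_inter A B
    have h3 := card_insert_le 0 (A ∪ B)
    rw [(hF hv).2.1, (hF hw).2.1] at h2
    rw [card_univ, Fintype.card_fin]
    omega
  simp only [A, B, mem_erase, mem_inter, mem_insert, mem_union, mem_filter, mem_univ, true_and,
    not_or] at haA hcB hcA he
  have ha0 : a ≠ 0 := ne_of_apply_ne v (by rw [haA.2, hv0]; decide)
  have hc0 : c ≠ 0 := ne_of_apply_ne w (by rw [hcB.2, hw0]; decide)
  have hvc : v c = 0 := (V.apply_eq_zero_or_eq_one (hF hv) hv0 hc0).resolve_right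
    fun h => hcA ⟨⟨hcB.1, h⟩, hcB⟩
  have hve : v e = 0 := (V.apply_eq_zero_or_eq_one (hF hv) hv0 he.1).resolve_right he.2.1
  have hwe : w e = 0 := (V.apply_eq_zero_or_eq_one (hF hw) hw0 he.1).resolve_right he.2.2
  have hel : e ≠ l := ne_of_apply_ne v (by rw [hve, hvl]; decide)
  obtain ⟨i, hi0, hia, hil, hvw⟩ := hint.exists_mul_ne_zero hsh hF hv hw
    (Fin.pos_iff_ne_zero.mpr ha0) (Fin.pos_iff_ne_zero.mpr hc0) (Fin.lt_last_iff_ne_last.mpr hel)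
    hv0 hvl haA.2 hvc hve hw0 hcB.2 hwe haA.1
  have hvi := (V.apply_eq_zero_or_eq_one (hF hv) hv0 hi0).resolve_left (left_ne_zero_of_mul hvw)
  have hwi := (V.apply_eq_zero_or_eq_one (hF hw) hw0 hi0).resolve_left (right_ne_zero_of_mul hvw)
  exact hia (mem_singleton.mp (hCa (hAB ▸ mem_filter.mpr ⟨mem_univ i, hvi, hwi, hil⟩)))

theorem V.eq_of_two_le_card_common_ones {n : ℕ} {v w : Fin n → ℤ} (hv : v ∈ V n 3 1)
    (hw : w ∈ V n 3 1) {p q : Fin n} (hvp : v p = -1) (hwp : w p = -1) (hvq : v q = 1)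
    (hwq : w q = 1) (h : 2 ≤ #{i | v i = 1 ∧ w i = 1 ∧ i ≠ q}) : v = w := by
  have hsub : ({i | v i = 1 ∧ w i = 1 ∧ i ≠ q} : Finset _) ⊆ ({i | v i = 1} : Finset _).erase q :=
    fun i hi => by
      simp only [mem_erase, mem_filter, mem_univ, true_and] at hi ⊢
      exact ⟨hi.2.2, hi.1⟩
  have heq := eq_of_subset_of_card_le hsub <| by
    rwa [card_erase_of_mem (mem_filter.mpr ⟨mem_univ q, hvq⟩), hv.2.1]
  refine V.eq_of_forall_eq_imp hv hw (fun i hi => ?_) fun i hi => ?_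
  · by_cases hiq : i = q
    · rw [hiq, hwq]
    · have hmem : i ∈ ({i | v i = 1} : Finset _).erase q :=
        mem_erase.mpr ⟨hiq, mem_filter.mpr ⟨mem_univ i, hi⟩⟩
      rw [← heq] at hmem
      exact (mem_filter.mp hmem).2.2.1
  · rw [V.eq_of_apply_eq_neg_one hv hi hvp, hwp]

theorem stmt_19 (F : Set (Fin 9 → ℤ)) (hF : F ⊆ V 9 3 1)
    (hint : ∀ v ∈ F, ∀ w ∈ F, dot v w ≠ -2)
    (hshift : ∀ i j : Fin 9, i < j → ∀ v ∈ F, shiftVec i j v ∈ F) :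
    (∀ v ∈ F, ∀ w ∈ F,
      v 0 = -1 → v 8 = 1 → w 0 = -1 → w 8 = 1 →
      2 ≤ (Finset.univ.filter fun i : Fin 9 =>
            v i = 1 ∧ w i = 1 ∧ (i : ℕ) ≠ 8).card) ∧
    (∀ v ∈ F, ∀ w ∈ F,
      v 0 = -1 → v 8 = 1 → w 0 = -1 → w 8 = 1 → v = w) := by
  have hcommon : ∀ v ∈ F, ∀ w ∈ F, v 0 = -1 → v 8 = 1 → w 0 = -1 → w 8 = 1 →
      2 ≤ #{i | v i = 1 ∧ w i = 1 ∧ i ≠ Fin.last 8} := fun v hv w hw =>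
    IsIntersecting.two_le_card_common_ones hint hshift hF le_rfl (by norm_num) hv hw
  refine ⟨fun v hv w hw hv0 hv8 hw0 hw8 => ?_, fun v hv w hw hv0 hv8 hw0 hw8 =>
    V.eq_of_two_le_card_common_ones (hF hv) (hF hw) hv0 hw0 hv8 hw8
      (hcommon v hv w hw hv0 hv8 hw0 hw8)⟩
  simpa only [← Fin.val_ne_iff, Fin.val_last] using hcommon v hv w hw hv0 hv8 hw0 hw8
end
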